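/- arXiv:cs/0702114 — 9 statements merged into one kernel-verified Lean document; each statement's English description precedes it below -/
import Mathlib

section
/- Suppose g = (g_1,...,g_n) is a nearest-neighbor traversal of V under cost c, and P = (P_1,...,P_k) is a partition of V such that any two nodes in the same part have cost at most D between them. Then the number of indices i with c(g_i, g_{i+1}) ≥ D+1 is at most k−1. -/
open Finset

/-- `g` (as a sequence `g 0, g 1, …, g (n-1)`) is a nearest-neighbor traversal for cost `c`:
it is a permutation of `V`, and each step goes to an unvisited node of minimum cost. -/
def IsNNTraversal {V : Type*} [Fintype V] (n : ℕ) (c : V → V → ℕ) (g : ℕ → V) : Prop :=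
  Function.Bijective (fun i : Fin n => g i) ∧
    ∀ i : ℕ, i + 1 < n → ∀ x : V, (∀ t : ℕ, t ≤ i → g t ≠ x) →
      c (g i) (g (i + 1)) ≤ c (g i) x

/-- `P : Fin k → Finset V` is a partition of `V` into `k` (nonempty) parts. -/
def IsPartition {V : Type*} [Fintype V] [DecidableEq V] (k : ℕ) (P : Fin k → Finset V) : Prop :=
  (∀ j, (P j).Nonempty) ∧ (∀ j j', j ≠ j' → Disjoint (P j) (P j')) ∧
    Finset.univ.biUnion P = Finset.univ

/-- If `g` is a nearest-neighbor traversal and `P` is a partition of `V`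
into `k` parts with pairwise costs within each part at most `D`, then the number of
indices `i` with `c (g i) (g (i+1)) ≥ D + 1` is at most `k - 1`. -/
theorem nn_long_steps_le_parts
    {V : Type*} [Fintype V] [DecidableEq V] (n : ℕ) (hn : n = Fintype.card V)
    (c : V → V → ℕ) (hsymm : ∀ u v, c u v = c v u)
    (g : ℕ → V) (hg : IsNNTraversal n c g)
    (D : ℕ) (k : ℕ) (P : Fin k → Finset V) (hP : IsPartition k P)
    (hD : ∀ j : Fin k, ∀ u ∈ P j, ∀ v ∈ P j, c u v ≤ D) :
    ((Finset.range (n - 1)).filter (fun i => D + 1 ≤ c (g i) (g (i + 1)))).card ≤ k - 1 := by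
  classical
  obtain ⟨hbij, hnn⟩ := hg
  obtain ⟨hne, hdisj, hcover⟩ := hP
  have hpart : ∀ v : V, ∃ j : Fin k, v ∈ P j := by
    intro v
    have : v ∈ Finset.univ.biUnion P := hcover ▸ Finset.mem_univ v
    simpa using this
  choose part hpartmem using hpart
  have hginj : ∀ s t, s < n → t < n → g s = g t → s = t := by
    intro s t hs ht h
    have := hbij.1 (a₁ := ⟨s, hs⟩) (a₂ := ⟨t, ht⟩) h
    exact Fin.mk.inj_iff.mp this
  set S := (Finset.range (n - 1)).filter (fun i => D + 1 ≤ c (g i) (g (i + 1))) with hS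
  rcases Nat.eq_zero_or_pos (n - 1) with h0 | hpos
  · simp [hS, h0]
  · have hkey : ∀ i ∈ S, ∀ x ∈ P (part (g i)), ∃ t ≤ i, g t = x := by
      intro i hi x hx
      simp only [hS, Finset.mem_filter, Finset.mem_range] at hi
      by_contra h
      push_neg at h
      have h1 := hnn i (by omega) x (fun t ht => h t ht)
      have h2 := hD (part (g i)) (g i) (hpartmem _) x hx
      omega
    have hmaps : ∀ i ∈ S, part (g i) ∈ Finset.univ.erase (part (g (n - 1))) := by
      intro i hi
      simp only [Finset.mem_erase, Finset.mem_univ, and_true]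
      intro heq
      have hmem : g (n - 1) ∈ P (part (g i)) := heq ▸ hpartmem (g (n - 1))
      obtain ⟨t, ht, hgt⟩ := hkey i hi (g (n - 1)) hmem
      have hi' : i < n - 1 := by
        simp only [hS, Finset.mem_filter, Finset.mem_range] at hi; exact hi.1
      have := hginj t (n - 1) (by omega) (by omega) hgt
      omega
    have hinj : ∀ i ∈ S, ∀ i' ∈ S, part (g i) = part (g i') → i = i' := by
      intro i hi i' hi' heq
      by_contra hne'
      wlog hlt : i < i' generalizing i i'
      · exact this i' hi' i hi heq.symm (Ne.symm hne') (by omega)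
      have hmem : g i' ∈ P (part (g i)) := heq ▸ hpartmem (g i')
      obtain ⟨t, ht, hgt⟩ := hkey i hi (g i') hmem
      have hi'lt : i' < n - 1 := by
        simp only [hS, Finset.mem_filter, Finset.mem_range] at hi'; exact hi'.1
      have := hginj t i' (by omega) (by omega) hgt
      omega
    calc S.card ≤ (Finset.univ.erase (part (g (n - 1)))).card :=
          Finset.card_le_card_of_injOn _ hmaps hinj
      _ = k - 1 := by
          rw [Finset.card_erase_of_mem (Finset.mem_univ _), Finset.card_univ, Fintype.card_fin]
end

section
/- If g is a nearest-neighbor traversal of V under a symmetric nonnegative integer-valued cost function c satisfying the triangle inequality, and o is a traversal of minimum cost C, then the cost of g is at most C·(1 + ln(n−1)). -/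
open Finset

/-- Telescoping the triangle inequality along an interval. -/
lemma nnAux_tele {V : Type*} (c : V → V → ℕ)
    (htri : ∀ u v w : V, c u v ≤ c u w + c w v) (o : ℕ → V) :
    ∀ u s : ℕ, s < u → c (o s) (o u) ≤ ∑ j ∈ Finset.Ico s u, c (o j) (o (j + 1)) := by
  intro u
  induction u with
  | zero => intro s hs; omega
  | succ u ih =>
    intro s hs
    rcases Nat.lt_succ_iff_lt_or_eq.mp hs with h | h
    · calc c (o s) (o (u + 1)) ≤ c (o s) (o u) + c (o u) (o (u + 1)) := htri _ _ _
        _ ≤ (∑ j ∈ Finset.Ico s u, c (o j) (o (j + 1))) + c (o u) (o (u + 1)) :=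
            Nat.add_le_add_right (ih s h) _
        _ = _ := (Finset.sum_Ico_succ_top (le_of_lt h) _).symm
    · subst h
      rw [Nat.Ico_succ_singleton, Finset.sum_singleton]

/-- Shortcutting: sum of distances along a strictly increasing subsequence of positions
is at most the sum along all consecutive pairs. -/
lemma nnAux_chain {V : Type*} (c : V → V → ℕ)
    (htri : ∀ u v w : V, c u v ≤ c u w + c w v) (o : ℕ → V) (t : ℕ → ℕ) :
    ∀ m : ℕ, (∀ r, r < m → t r < t (r + 1)) →
      ∑ r ∈ Finset.range m, c (o (t r)) (o (t (r + 1))) ≤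
        ∑ j ∈ Finset.Ico (t 0) (t m), c (o j) (o (j + 1)) := by
  intro m
  induction m with
  | zero => simp
  | succ m ih =>
    intro h
    have h0m : t 0 ≤ t m := by
      clear ih
      induction m with
      | zero => exact le_refl _
      | succ m ih2 =>
        exact le_trans (ih2 (fun r hr => h r (by omega))) (le_of_lt (h m (by omega)))
    rw [Finset.sum_range_succ,
      ← Finset.sum_Ico_consecutive _ h0m (le_of_lt (h m (Nat.lt_succ_self m)))]
    exact Nat.add_le_add (ih (fun r hr => h r (by omega)))
      (nnAux_tele c htri o _ _ (h m (Nat.lt_succ_self m)))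

/-- If every subset's cardinality times its minimum value is at most `C`, the total sum
is at most `C` times the harmonic number. -/
lemma nnAux_harmonic (ℓ : ℕ → ℕ) (C : ℕ) :
    ∀ A : Finset ℕ,
      (∀ B : Finset ℕ, B ⊆ A → ∀ i0 ∈ B, (∀ j ∈ B, ℓ i0 ≤ ℓ j) → B.card * ℓ i0 ≤ C) →
      (∑ i ∈ A, (ℓ i : ℝ)) ≤ (C : ℝ) * (harmonic A.card : ℝ) := by
  intro A
  induction A using Finset.strongInduction with
  | _ A ih =>
    intro hK
    rcases A.eq_empty_or_nonempty with rfl | hA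
    · simp
    · obtain ⟨i0, hi0, hmin⟩ := A.exists_min_image ℓ hA
      have hK0 : (A.card * ℓ i0 : ℕ) ≤ C := hK A (subset_refl A) i0 hi0 hmin
      have h2 := ih (A.erase i0) (Finset.erase_ssubset hi0)
        (fun B hB => hK B (hB.trans (Finset.erase_subset _ _)))
      have hcardA : A.card = (A.erase i0).card + 1 := by
        rw [Finset.card_erase_of_mem hi0]
        have : 0 < A.card := Finset.card_pos.mpr hA
        omega
      rw [← Finset.add_sum_erase A _ hi0, hcardA, harmonic_succ]
      set m := (A.erase i0).card with hm
      have hpos : (0 : ℝ) < (m : ℝ) + 1 := by positivity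
      rw [hcardA] at hK0
      have hcast : ((m : ℝ) + 1) * (ℓ i0 : ℝ) ≤ (C : ℝ) := by exact_mod_cast hK0
      have h1 : (ℓ i0 : ℝ) ≤ (C : ℝ) * ((m : ℝ) + 1)⁻¹ := by
        rw [← div_eq_mul_inv, le_div_iff₀ hpos]
        calc (ℓ i0 : ℝ) * ((m : ℝ) + 1) = ((m : ℝ) + 1) * (ℓ i0 : ℝ) := mul_comm _ _
          _ ≤ (C : ℝ) := hcast
      push_cast
      linarith

/-- If `g` is a nearest-neighbor traversal under a symmetric cost `c`
satisfying the triangle inequality, and `o` is a minimum-cost traversal of cost `C`,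
then the cost of `g` is at most `C * (1 + ln (n - 1))`. -/
theorem nn_approx_ratio_log
    {V : Type*} [Fintype V] (n : ℕ) (hn : n = Fintype.card V) (hn2 : 2 ≤ n)
    (c : V → V → ℕ) (hsymm : ∀ u v, c u v = c v u)
    (htri : ∀ u v w : V, c u v ≤ c u w + c w v)
    (g : ℕ → V) (hg : IsNNTraversal n c g)
    (o : ℕ → V) (ho : Function.Bijective (fun i : Fin n => o i))
    (C : ℕ) (hC : C = ∑ t ∈ Finset.range (n - 1), c (o t) (o (t + 1)))
    (hopt : ∀ o' : ℕ → V, Function.Bijective (fun i : Fin n => o' i) →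
      C ≤ ∑ t ∈ Finset.range (n - 1), c (o' t) (o' (t + 1))) :
    ((∑ i ∈ Finset.range (n - 1), c (g i) (g (i + 1)) : ℕ) : ℝ) ≤
      (C : ℝ) * (1 + Real.log (n - 1)) := by
  classical
  set ℓ : ℕ → ℕ := fun i => c (g i) (g (i + 1)) with hℓ
  have hginj : ∀ i j : ℕ, i < n → j < n → g i = g j → i = j := by
    intro i j hi hj hij
    have := hg.1.1 (a₁ := ⟨i, hi⟩) (a₂ := ⟨j, hj⟩) hij
    exact Fin.mk.inj_iff.mp this
  have hoinj : ∀ i j : ℕ, i < n → j < n → o i = o j → i = j := by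
    intro i j hi hj hij
    have := ho.1 (a₁ := ⟨i, hi⟩) (a₂ := ⟨j, hj⟩) hij
    exact Fin.mk.inj_iff.mp this
  -- pair lemma
  have hpair : ∀ a b : ℕ, a < b → b < n → ℓ a ≤ c (g a) (g b) := by
    intro a b hab hbn
    refine hg.2 a (by omega) (g b) ?_
    intro t ht hgt
    have := hginj t b (by omega) hbn hgt
    omega
  -- key counting lemma
  have hK : ∀ B : Finset ℕ, B ⊆ Finset.range (n - 1) → ∀ i0 ∈ B,
      (∀ j ∈ B, ℓ i0 ≤ ℓ j) → B.card * ℓ i0 ≤ C := by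
    intro B hBsub i0 hi0 hmin
    set k := B.card with hk
    have hN : n - 1 ∉ B := fun h => by
      have := Finset.mem_range.mp (hBsub h); omega
    set A' : Finset ℕ := insert (n - 1) B with hA'
    have hA'card : A'.card = k + 1 := by
      rw [hA', Finset.card_insert_of_notMem hN]
    have hA'sub : ∀ a ∈ A', a < n := by
      intro a ha
      rcases Finset.mem_insert.mp ha with rfl | h
      · omega
      · have := Finset.mem_range.mp (hBsub h); omega
    set S : Finset V := A'.image g with hS
    have hScard : S.card = k + 1 := by
      rw [hS, Finset.card_image_of_injOn, hA'card]
      intro a ha b hb hab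
      exact hginj a b (hA'sub a ha) (hA'sub b hb) hab
    set P : Finset (Fin n) := Finset.univ.filter (fun t : Fin n => o ↑t ∈ S) with hP
    have hPimg : P.image (fun t : Fin n => o ↑t) = S := by
      apply Finset.Subset.antisymm
      · intro v hv
        obtain ⟨t, ht, rfl⟩ := Finset.mem_image.mp hv
        exact (Finset.mem_filter.mp ht).2
      · intro v hv
        obtain ⟨t, ht⟩ := ho.2 v
        have ht' : o ↑t = v := ht
        exact Finset.mem_image.mpr
          ⟨t, Finset.mem_filter.mpr ⟨Finset.mem_univ _, by rw [ht']; exact hv⟩, ht'⟩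
    have hPcard : P.card = k + 1 := by
      rw [← hScard, ← hPimg, Finset.card_image_of_injective _ ho.1]
    set e := P.orderIsoOfFin hPcard with he
    set t : ℕ → ℕ := fun r => if h : r < k + 1 then ((e ⟨r, h⟩ : Fin n) : ℕ) else 0 with ht
    have ht_lt : ∀ r, r < k + 1 → t r < n := by
      intro r hr
      simp only [ht, dif_pos hr]
      exact (e ⟨r, hr⟩ : Fin n).isLt
    have ht_mem : ∀ r, r < k + 1 → ∃ a ∈ A', g a = o (t r) := by
      intro r hr
      have hmem : o (t r) ∈ S := by
        simp only [ht, dif_pos hr]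
        exact (Finset.mem_filter.mp (e ⟨r, hr⟩).2).2
      rw [hS] at hmem
      exact Finset.mem_image.mp hmem
    have ht_mono : ∀ r, r < k → t r < t (r + 1) := by
      intro r hr
      have h1 : r < k + 1 := by omega
      have h2 : r + 1 < k + 1 := by omega
      simp only [ht, dif_pos h1, dif_pos h2]
      have : e ⟨r, h1⟩ < e ⟨r + 1, h2⟩ := by
        apply e.strictMono
        exact Fin.mk_lt_mk.mpr (Nat.lt_succ_self r)
      exact this
    -- each edge is at least ℓ i0
    have hedge : ∀ r, r < k → ℓ i0 ≤ c (o (t r)) (o (t (r + 1))) := by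
      intro r hr
      obtain ⟨a, ha, hga⟩ := ht_mem r (by omega)
      obtain ⟨b, hb, hgb⟩ := ht_mem (r + 1) (by omega)
      have hane : a ≠ b := by
        intro hab
        subst hab
        have : o (t r) = o (t (r + 1)) := by rw [← hga, ← hgb]
        have := hoinj _ _ (ht_lt r (by omega)) (ht_lt (r + 1) (by omega)) this
        have := ht_mono r hr
        omega
      have han : a < n := hA'sub a ha
      have hbn : b < n := hA'sub b hb
      rcases Nat.lt_or_ge a b with h | h
      · -- a < b, so a ∈ B
        have haB : a ∈ B := by
          rcases Finset.mem_insert.mp ha with rfl | h'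
          · omega
          · exact h'
        calc ℓ i0 ≤ ℓ a := hmin a haB
          _ ≤ c (g a) (g b) := hpair a b h hbn
          _ = c (o (t r)) (o (t (r + 1))) := by rw [hga, hgb]
      · have hba : b < a := by omega
        have hbB : b ∈ B := by
          rcases Finset.mem_insert.mp hb with rfl | h'
          · omega
          · exact h'
        calc ℓ i0 ≤ ℓ b := hmin b hbB
          _ ≤ c (g b) (g a) := hpair b a hba han
          _ = c (o (t r)) (o (t (r + 1))) := by rw [hga, hgb, hsymm]
    calc k * ℓ i0 = ∑ _r ∈ Finset.range k, ℓ i0 := by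
          rw [Finset.sum_const, Finset.card_range, smul_eq_mul]
      _ ≤ ∑ r ∈ Finset.range k, c (o (t r)) (o (t (r + 1))) :=
          Finset.sum_le_sum (fun r hrr => hedge r (Finset.mem_range.mp hrr))
      _ ≤ ∑ j ∈ Finset.Ico (t 0) (t k), c (o j) (o (j + 1)) :=
          nnAux_chain c htri o t k ht_mono
      _ ≤ ∑ j ∈ Finset.range (n - 1), c (o j) (o (j + 1)) := by
          apply Finset.sum_le_sum_of_subset
          intro j hj
          rw [Finset.mem_Ico] at hj
          rw [Finset.mem_range]
          have := ht_lt k (by omega)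
          omega
      _ = C := hC.symm
  -- assemble
  have hH := nnAux_harmonic ℓ C (Finset.range (n - 1)) (fun B hB => hK B hB)
  rw [Finset.card_range] at hH
  have hlog : (harmonic (n - 1) : ℝ) ≤ 1 + Real.log (n - 1 : ℕ) :=
    harmonic_le_one_add_log (n - 1)
  have hcast : ((n - 1 : ℕ) : ℝ) = (n : ℝ) - 1 := by
    have h1 : 1 ≤ n := by omega
    push_cast [h1]
    ring
  rw [hcast] at hlog
  have hsum : ((∑ i ∈ Finset.range (n - 1), c (g i) (g (i + 1)) : ℕ) : ℝ)
      = ∑ i ∈ Finset.range (n - 1), (ℓ i : ℝ) := by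
    push_cast
    rfl
  rw [hsum]
  calc ∑ i ∈ Finset.range (n - 1), (ℓ i : ℝ)
      ≤ (C : ℝ) * (harmonic (n - 1) : ℝ) := hH
    _ ≤ (C : ℝ) * (1 + Real.log ((n : ℝ) - 1)) := by
        apply mul_le_mul_of_nonneg_left hlog (by positivity)
end

section
/- If g is a nearest-neighbor traversal of V under a symmetric cost function c satisfying the triangle inequality, with minimum pairwise cost m and maximum pairwise cost M, and o is a minimum-cost traversal of cost C, then the cost of g is at most C·(1 + ln(M/m)). -/
/-!
Let `d i` be the cost of the `i`-th nearest-neighbor step. For a threshold `t`, take the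
steps of cost at least `t` together with the last vertex: by the nearest-neighbor rule these
vertices are pairwise at cost at least `t`, so by the triangle inequality any traversal, which
visits them all, costs at least `t` times their number minus one. Hence at most `C / t` steps
cost at least `t`, and the layer-cake formula
`∑ d i = (n - 1) m + ∑_{m ≤ t < M} #{i | t < d i}` gives the bound
`C + C ∑_{m < t ≤ M} 1 / t`, and `∑_{m < t ≤ M} 1 / t ≤ ∫_m^M dx / x = ln (M / m)`.
-/

open Finset

open Function

def pathCost {V : Type*} (c : V → V → ℕ) (o : ℕ → V) (k : ℕ) : ℕ :=
  ∑ i ∈ range k, c (o i) (o (i + 1))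

section Traversal

variable {V : Type*} (c : V → V → ℕ)

theorem cost_le_sum_Ico (htri : ∀ u v w : V, c u v ≤ c u w + c w v) (o : ℕ → V) {p q : ℕ}
    (hpq : p < q) : c (o p) (o q) ≤ ∑ i ∈ Ico p q, c (o i) (o (i + 1)) := by
  induction q, hpq using Nat.le_induction with
  | base => simp
  | succ q hpq ih =>
    rw [sum_Ico_succ_top (Nat.le_of_succ_le hpq)]
    exact (htri _ _ (o q)).trans (Nat.add_le_add_right ih _)

theorem card_sub_one_mul_le_pathCost (htri : ∀ u v w : V, c u v ≤ c u w + c w v)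
    (o : ℕ → V) (t : ℕ) (P : Finset ℕ) :
    ∀ k, (∀ p ∈ P, p ≤ k) → (∀ p ∈ P, ∀ q ∈ P, p < q → t ≤ c (o p) (o q)) →
      (#P - 1) * t ≤ pathCost c o k := by
  induction P using Finset.induction_on_max with
  | empty => simp
  | insert a s ha ih =>
    intro k hk hsep
    obtain rfl | hs := s.eq_empty_or_nonempty
    · simp
    set b := s.max' hs
    have hba : b < a := ha b (s.max'_mem hs)
    have hprefix : (#s - 1) * t ≤ pathCost c o b :=
      ih b (fun p hp => s.le_max' p hp) fun p hp q hq => hsep p (mem_insert_of_mem hp) q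
        (mem_insert_of_mem hq)
    have hlast : t ≤ ∑ i ∈ Ico b a, c (o i) (o (i + 1)) :=
      (hsep b (mem_insert_of_mem (s.max'_mem hs)) a (mem_insert_self a s) hba).trans
        (cost_le_sum_Ico c htri o hba)
    have hcard : #(insert a s) - 1 = #s - 1 + 1 := by
      rw [card_insert_of_notMem fun h => (ha a h).false]
      have := hs.card_pos
      omega
    calc (#(insert a s) - 1) * t = (#s - 1) * t + t := by rw [hcard, add_one_mul]
      _ ≤ pathCost c o b + ∑ i ∈ Ico b a, c (o i) (o (i + 1)) := add_le_add hprefix hlast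
      _ = pathCost c o a := sum_range_add_sum_Ico _ hba.le
      _ ≤ pathCost c o k :=
        sum_le_sum_of_subset (range_subset_range.2 (hk a (mem_insert_self a s)))

theorem injOn_of_bijective_fin {n : ℕ} {o : ℕ → V} (ho : Bijective fun i : Fin n => o i) :
    Set.InjOn o (Set.Iio n) :=
  fun p hp q hq h => congrArg Fin.val (ho.1 (a₁ := ⟨p, hp⟩) (a₂ := ⟨q, hq⟩) h)

theorem apply_ne_apply_succ_of_bijective_fin {n : ℕ} {o : ℕ → V}
    (ho : Bijective fun i : Fin n => o i) {i : ℕ} (hi : i < n - 1) : o i ≠ o (i + 1) :=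
  fun h => absurd (injOn_of_bijective_fin ho (Set.mem_Iio.2 (by omega))
    (Set.mem_Iio.2 (by omega)) h) (by omega)

theorem card_sub_one_mul_le_pathCost_of_bijective (htri : ∀ u v w : V, c u v ≤ c u w + c w v)
    {n : ℕ} {o : ℕ → V} (ho : Bijective fun i : Fin n => o i) {t : ℕ} {W : Finset V}
    (hW : (W : Set V).Pairwise fun u v => t ≤ c u v) :
    (#W - 1) * t ≤ pathCost c o (n - 1) := by
  classical
  set e := Equiv.ofBijective _ ho
  have hcard : #(W.image fun v => (e.symm v : ℕ)) = #W :=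
    card_image_of_injective _ (Fin.val_injective.comp e.symm.injective)
  rw [← hcard]
  refine card_sub_one_mul_le_pathCost c htri o t _ _ ?_ ?_
  · simp only [mem_image]
    rintro _ ⟨v, -, rfl⟩
    have := (e.symm v).isLt
    omega
  · simp only [mem_image]
    rintro _ ⟨u, hu, rfl⟩ _ ⟨v, hv, rfl⟩ huv
    have hu' : o (e.symm u) = u := e.apply_symm_apply u
    have hv' : o (e.symm v) = v := e.apply_symm_apply v
    rw [hu', hv']
    exact hW hu hv fun h => huv.ne (by rw [h])

end Traversal

namespace IsNNTraversal

variable {V : Type*} [Fintype V] {n : ℕ} {c : V → V → ℕ} {g : ℕ → V}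

theorem cost_succ_le (hg : IsNNTraversal n c g) {i j : ℕ} (hij : i < j) (hj : j < n) :
    c (g i) (g (i + 1)) ≤ c (g i) (g j) :=
  hg.2 i (by omega) (g j) fun s hs h =>
    absurd (injOn_of_bijective_fin hg.1 (Set.mem_Iio.2 (by omega)) (Set.mem_Iio.2 hj) h) (by omega)

theorem card_expensive_steps_mul_le (hg : IsNNTraversal n c g) (hsymm : ∀ u v, c u v = c v u)
    (htri : ∀ u v w : V, c u v ≤ c u w + c w v) {o : ℕ → V}
    (ho : Bijective fun i : Fin n => o i) (t : ℕ) :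
    #{i ∈ range (n - 1) | t ≤ c (g i) (g (i + 1))} * t ≤ pathCost c o (n - 1) := by
  classical
  obtain rfl | hn := Nat.eq_zero_or_pos n
  · simp
  set S := {i ∈ range (n - 1) | t ≤ c (g i) (g (i + 1))}
  have hS : ∀ i ∈ S, i < n - 1 := fun i hi => mem_range.1 (mem_filter.1 hi).1
  set T := insert (n - 1) S
  have hT : ∀ i ∈ T, i < n := by
    intro i hi
    rcases mem_insert.1 hi with rfl | hi
    · omega
    · have := hS i hi
      omega
  have hinj : Set.InjOn g T := (injOn_of_bijective_fin hg.1).mono hT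
  have hcard : #(T.image g) - 1 = #S := by
    rw [card_image_of_injOn hinj, card_insert_of_notMem fun h => (hS _ h).false,
      Nat.add_sub_cancel]
  have hlt : ∀ i ∈ T, ∀ j ∈ T, i < j → t ≤ c (g i) (g j) := by
    intro i hi j hj hij
    have hiS : i ∈ S := by
      rcases mem_insert.1 hi with rfl | hi
      · exact absurd (hT j hj) (by omega)
      · exact hi
    exact (mem_filter.1 hiS).2.trans (hg.cost_succ_le hij (hT j hj))
  have hsep : ((T.image g : Finset V) : Set V).Pairwise fun u v => t ≤ c u v := by
    rw [coe_image, hinj.pairwise_image]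
    intro i hi j hj hij
    rcases hij.lt_or_gt with h | h
    · exact hlt i hi j hj h
    · exact (hsymm _ _).le.trans' (hlt j hj i hi h)
  rw [← hcard]
  exact card_sub_one_mul_le_pathCost_of_bijective c htri ho hsep

end IsNNTraversal

theorem sum_eq_card_mul_add_sum_card_lt {ι : Type*} (s : Finset ι) (d : ι → ℕ) {m M : ℕ}
    (hm : ∀ i ∈ s, m ≤ d i) (hM : ∀ i ∈ s, d i ≤ M) :
    ∑ i ∈ s, d i = #s * m + ∑ t ∈ Ico m M, #{i ∈ s | t < d i} := by
  have h : ∀ i ∈ s, d i = m + ∑ t ∈ Ico m M, if t < d i then 1 else 0 := by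
    intro i hi
    have hIco : {t ∈ Ico m M | t < d i} = Ico m (d i) := by
      ext t
      simp only [mem_filter, mem_Ico]
      have := hM i hi
      omega
    rw [← card_filter, hIco, Nat.card_Ico]
    have := hm i hi
    omega
  rw [sum_congr rfl h, sum_add_distrib, sum_const, smul_eq_mul, mul_comm, sum_comm]
  simp only [card_filter]

theorem sum_Ico_inv_succ_le_log_div {m M : ℕ} (hm : 0 < m) (hmM : m ≤ M) :
    ∑ t ∈ Ico m M, ((t + 1 : ℕ) : ℝ)⁻¹ ≤ Real.log (M / m) := by
  have hm' : (0 : ℝ) < m := by exact_mod_cast hm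
  rw [← integral_inv_of_pos hm' (hm'.trans_le (by exact_mod_cast hmM))]
  exact (inv_antitoneOn_Icc_right hm').sum_le_integral_Ico hmM

theorem nn_approx_ratio_aspect_general
    {V : Type*} [Fintype V] (n : ℕ)
    (c : V → V → ℕ) (hsymm : ∀ u v, c u v = c v u)
    (htri : ∀ u v w : V, c u v ≤ c u w + c w v)
    (m M : ℕ) (hm1 : 1 ≤ m)
    (hm : ∀ u v : V, u ≠ v → m ≤ c u v) (hm' : ∃ u v : V, u ≠ v ∧ c u v = m)
    (hM : ∀ u v : V, u ≠ v → c u v ≤ M)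
    (g : ℕ → V) (hg : IsNNTraversal n c g)
    (o : ℕ → V) (ho : Function.Bijective (fun i : Fin n => o i))
    (C : ℕ) (hC : C = ∑ t ∈ Finset.range (n - 1), c (o t) (o (t + 1))) :
    ((∑ i ∈ Finset.range (n - 1), c (g i) (g (i + 1)) : ℕ) : ℝ) ≤
      (C : ℝ) * (1 + Real.log ((M : ℝ) / (m : ℝ))) := by
  have hstep {o : ℕ → V} (ho : Bijective fun i : Fin n => o i) (i : ℕ)
      (hi : i ∈ range (n - 1)) : o i ≠ o (i + 1) :=
    apply_ne_apply_succ_of_bijective_fin ho (mem_range.1 hi)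
  have hmM : m ≤ M := by
    obtain ⟨u, v, huv, rfl⟩ := hm'
    exact hM u v huv
  have hlayers := sum_eq_card_mul_add_sum_card_lt (range (n - 1)) (fun i => c (g i) (g (i + 1)))
    (fun i hi => hm _ _ (hstep hg.1 i hi)) (fun i hi => hM _ _ (hstep hg.1 i hi))
  have hbase : (n - 1) * m ≤ C := by
    simpa [hC] using card_nsmul_le_sum _ _ _ fun i hi => hm _ _ (hstep ho i hi)
  have hlevel (t : ℕ) : (#{i ∈ range (n - 1) | t < c (g i) (g (i + 1))} : ℝ) ≤
      C * ((t + 1 : ℕ) : ℝ)⁻¹ := by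
    rw [← div_eq_mul_inv, le_div_iff₀ (by positivity), hC]
    exact_mod_cast hg.card_expensive_steps_mul_le hsymm htri ho (t + 1)
  calc ((∑ i ∈ range (n - 1), c (g i) (g (i + 1)) : ℕ) : ℝ)
      = ((n - 1) * m : ℕ) +
          ∑ t ∈ Ico m M, (#{i ∈ range (n - 1) | t < c (g i) (g (i + 1))} : ℝ) := by
        rw [hlayers, card_range]
        push_cast
        rfl
    _ ≤ C + ∑ t ∈ Ico m M, C * ((t + 1 : ℕ) : ℝ)⁻¹ :=
        add_le_add (by exact_mod_cast hbase) (sum_le_sum fun t _ => hlevel t)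
    _ ≤ C * (1 + Real.log (M / m)) := by
        rw [← mul_sum, mul_add, mul_one]
        gcongr
        exact sum_Ico_inv_succ_le_log_div hm1 hmM

/-- With `m` the minimum and `M` the maximum pairwise cost (`m ≥ 1`),
the cost of a nearest-neighbor traversal is at most `C * (1 + ln (M / m))` where `C` is
the minimum traversal cost (aspect-ratio bound). -/
theorem nn_approx_ratio_aspect
    {V : Type*} [Fintype V] (n : ℕ) (hn : n = Fintype.card V) (hn2 : 2 ≤ n)
    (c : V → V → ℕ) (hsymm : ∀ u v, c u v = c v u)
    (htri : ∀ u v w : V, c u v ≤ c u w + c w v)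
    (m M : ℕ) (hm1 : 1 ≤ m)
    (hm : ∀ u v : V, u ≠ v → m ≤ c u v) (hm' : ∃ u v : V, u ≠ v ∧ c u v = m)
    (hM : ∀ u v : V, u ≠ v → c u v ≤ M) (hM' : ∃ u v : V, u ≠ v ∧ c u v = M)
    (g : ℕ → V) (hg : IsNNTraversal n c g)
    (o : ℕ → V) (ho : Function.Bijective (fun i : Fin n => o i))
    (C : ℕ) (hC : C = ∑ t ∈ Finset.range (n - 1), c (o t) (o (t + 1)))
    (hopt : ∀ o' : ℕ → V, Function.Bijective (fun i : Fin n => o' i) →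
      C ≤ ∑ t ∈ Finset.range (n - 1), c (o' t) (o' (t + 1))) :
    ((∑ i ∈ Finset.range (n - 1), c (g i) (g (i + 1)) : ℕ) : ℝ) ≤
      (C : ℝ) * (1 + Real.log ((M : ℝ) / (m : ℝ))) :=
  nn_approx_ratio_aspect_general n c hsymm htri m M hm1 hm hm' hM g hg o ho C hC
end

section
/- If a and b are L^i-neighbors (a < b), then b ≤ 2a or a = 0. In particular, for a ≥ 1, the gap b − a of any leg of L^i starting at a is at most a. -/
/-- `a` and `b` are `L`-neighbors: `a < b` and `L ∩ {a, …, b} = {a, b}`. -/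
def LNbr (L : Set ℕ) (a b : ℕ) : Prop := a < b ∧ L ∩ Set.Icc a b = {a, b}

/-- The layers of the layered ring graph `LR^k(2^m)`:
`L^1 = {0, 1, 2, 4, …, 2^(m-1), 2^m}` and
`L^(i+1) = {0} ∪ ⋃_{N^i(a,b)} {a + 2^t : 0 ≤ t ≤ log₂ (b - a)}`. -/
def Lset (m : ℕ) : ℕ → Set ℕ
  | 0 => ∅
  | 1 => {0} ∪ {x | ∃ t ≤ m, x = 2 ^ t}
  | i + 2 => {0} ∪ {x | ∃ a b, LNbr (Lset m (i + 1)) a b ∧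
      ∃ t ≤ Nat.log 2 (b - a), x = a + 2 ^ t}

lemma lnbr_mem_left {L : Set ℕ} {a b : ℕ} (h : LNbr L a b) : a ∈ L := by
  have : a ∈ L ∩ Set.Icc a b := by
    rw [h.2]; exact Set.mem_insert a {b}
  exact this.1

lemma lnbr_mem_right {L : Set ℕ} {a b : ℕ} (h : LNbr L a b) : b ∈ L := by
  have : b ∈ L ∩ Set.Icc a b := by
    rw [h.2]; exact Set.mem_insert_of_mem a rfl
  exact this.1

lemma lnbr_between {L : Set ℕ} {a b c : ℕ} (h : LNbr L a b) (hc : c ∈ L)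
    (h1 : a ≤ c) (h2 : c ≤ b) : c = a ∨ c = b := by
  have : c ∈ L ∩ Set.Icc a b := ⟨hc, h1, h2⟩
  rw [h.2] at this
  exact this

lemma lnbr_le {L : Set ℕ} {a b c : ℕ} (h : LNbr L a b) (hc : c ∈ L)
    (h1 : a < c) : b ≤ c := by
  by_contra h'
  push_neg at h'
  rcases lnbr_between h hc h1.le h'.le with rfl | rfl
  · exact absurd h1 (lt_irrefl _)
  · exact absurd h' (lt_irrefl _)

lemma zero_one_mem (m : ℕ) : ∀ i, (0 : ℕ) ∈ Lset m (i+1) ∧ (1 : ℕ) ∈ Lset m (i+1) := by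
  intro i
  induction i with
  | zero =>
    constructor
    · exact Or.inl rfl
    · exact Or.inr ⟨0, Nat.zero_le m, rfl⟩
  | succ i ih =>
    have hleg : LNbr (Lset m (i+1)) 0 1 := by
      refine ⟨Nat.zero_lt_one, ?_⟩
      ext x
      simp only [Set.mem_inter_iff, Set.mem_Icc, Set.mem_insert_iff, Set.mem_singleton_iff]
      constructor
      · rintro ⟨hx, -, hx1⟩
        omega
      · rintro (rfl | rfl)
        · exact ⟨ih.1, le_refl _, Nat.zero_le _⟩
        · exact ⟨ih.2, Nat.zero_le _, le_refl _⟩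
    constructor
    · exact Or.inl rfl
    · exact Or.inr ⟨0, 1, hleg, 0, Nat.zero_le _, rfl⟩

/-- Any element of `L^(i+2)` strictly inside the leg `(a', b']` of `L^(i+1)` comes from
this very leg. -/
lemma mem_interval (m i : ℕ) {a' b' x : ℕ} (hab : LNbr (Lset m (i+1)) a' b')
    (hx : x ∈ Lset m (i+2)) (h1 : a' < x) (h2 : x ≤ b') :
    ∃ u ≤ Nat.log 2 (b' - a'), x = a' + 2 ^ u := by
  have hx' : x = 0 ∨ ∃ a b, LNbr (Lset m (i + 1)) a b ∧
      ∃ t ≤ Nat.log 2 (b - a), x = a + 2 ^ t := by simpa [Lset] using hx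
  rcases hx' with rfl | ⟨a₂, b₂, hleg₂, t₂, ht₂, rfl⟩
  · omega
  have hp : (1:ℕ) ≤ 2 ^ t₂ := Nat.one_le_two_pow
  have hax : a₂ < a₂ + 2 ^ t₂ := by omega
  have hlt₂ := hleg₂.1
  have hxb : a₂ + 2 ^ t₂ ≤ b₂ := by
    have h3 : 2 ^ t₂ ≤ 2 ^ Nat.log 2 (b₂ - a₂) := Nat.pow_le_pow_right (by norm_num) ht₂
    have h4 : 2 ^ Nat.log 2 (b₂ - a₂) ≤ b₂ - a₂ :=
      Nat.pow_log_le_self 2 (by omega : b₂ - a₂ ≠ 0)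
    omega
  have haa : a₂ = a' := by
    rcases lt_trichotomy a₂ a' with h | h | h
    · rcases lnbr_between hleg₂ (lnbr_mem_left hab) h.le (by omega : a' ≤ b₂) with h' | h'
      · omega
      · omega
    · exact h
    · rcases lnbr_between hab (lnbr_mem_left hleg₂) h.le (by omega : a₂ ≤ b') with h' | h'
      · omega
      · omega
  subst haa
  have hbb : b₂ = b' := by
    rcases le_or_gt b₂ b' with h | h
    · rcases lnbr_between hab (lnbr_mem_right hleg₂) (le_of_lt hleg₂.1) h with h' | h'
      · exact absurd h' (by have := hleg₂.1; omega)
      · exact h'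
    · rcases lnbr_between hleg₂ (lnbr_mem_right hab) (le_of_lt hab.1) h.le with h' | h'
      · exact absurd h' (by have := hab.1; omega)
      · exact h'.symm
  subst hbb
  exact ⟨t₂, ht₂, rfl⟩

lemma lset_key (m : ℕ) : ∀ i a b, LNbr (Lset m (i+1)) a b →
    (∃ t, b = a + 2 ^ t) ∧ (a = 0 ∨ b ≤ 2 * a) := by
  intro i
  induction i with
  | zero =>
    intro a b hab
    have ha : a = 0 ∨ ∃ t ≤ m, a = 2 ^ t := by simpa [Lset] using lnbr_mem_left hab
    have hb : b = 0 ∨ ∃ t ≤ m, b = 2 ^ t := by simpa [Lset] using lnbr_mem_right hab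
    have hlt := hab.1
    rcases ha with rfl | ⟨t, htm, rfl⟩
    · -- a = 0 : show b = 1
      have h1 : (1:ℕ) ∈ Lset m 1 := Or.inr ⟨0, Nat.zero_le m, rfl⟩
      rcases lnbr_between hab h1 (Nat.zero_le _) (by omega) with h' | h'
      · omega
      · exact ⟨⟨0, by omega⟩, Or.inl rfl⟩
    · rcases hb with rfl | ⟨u, hum, rfl⟩
      · have := Nat.one_le_two_pow (n := t); omega
      · have htu : t < u := by
          have := (Nat.pow_lt_pow_iff_right (a := 2) (by norm_num)).mp hlt
          omega
        have hc : (2 : ℕ) ^ (t+1) ∈ Lset m 1 := Or.inr ⟨t+1, by omega, rfl⟩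
        have hle : (2:ℕ) ^ (t+1) ≤ 2 ^ u := Nat.pow_le_pow_right (by norm_num) htu
        have hlt' : (2:ℕ) ^ t < 2 ^ (t+1) :=
          Nat.pow_lt_pow_right (by norm_num) (Nat.lt_succ_self t)
        rcases lnbr_between hab hc hlt'.le hle with h' | h'
        · omega
        · have hps : (2:ℕ) ^ (t+1) = 2 ^ t + 2 ^ t := by ring
          exact ⟨⟨t, by omega⟩, Or.inr (by omega)⟩
  | succ i ih =>
    intro a b hab
    have hlt := hab.1
    by_cases ha0 : a = 0
    · subst ha0
      have h1 : (1:ℕ) ∈ Lset m (i+2) := (zero_one_mem m (i+1)).2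
      rcases lnbr_between hab h1 (Nat.zero_le _) (by omega) with h' | h'
      · omega
      · exact ⟨⟨0, by omega⟩, Or.inl rfl⟩
    · have ha : a = 0 ∨ ∃ a' b', LNbr (Lset m (i + 1)) a' b' ∧
          ∃ t ≤ Nat.log 2 (b' - a'), a = a' + 2 ^ t := by
        simpa [Lset] using lnbr_mem_left hab
      rcases ha with rfl | ⟨a', b', hleg, t, ht, rfl⟩
      · exact absurd rfl ha0
      obtain ⟨⟨s, hbs⟩, _⟩ := ih a' b' hleg
      have hlog : Nat.log 2 (b' - a') = s := by
        have h5 : b' - a' = 2 ^ s := by rw [hbs, Nat.add_sub_cancel_left]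
        rw [h5, Nat.log_pow (by norm_num)]
      rw [hlog] at ht
      have hpt : (1:ℕ) ≤ 2 ^ t := Nat.one_le_two_pow
      rcases eq_or_lt_of_le ht with rfl | hts
    -- case t = s : a = b'
      · have hab' : a' + 2 ^ t = b' := by omega
        -- b gives an element of L^(i+1) above a
        have hb : a' + 2 ^ t + 0 < b → (b = 0 ∨ ∃ a₂ b₂, LNbr (Lset m (i + 1)) a₂ b₂ ∧
            ∃ t₂ ≤ Nat.log 2 (b₂ - a₂), b = a₂ + 2 ^ t₂) := fun _ => by
          simpa [Lset] using lnbr_mem_right hab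
        rcases hb (by omega) with rfl | ⟨a₂, b₂, hleg₂, t₂, ht₂, hbval⟩
        · omega
        have hlt₂ := hleg₂.1
        have hbb₂ : b ≤ b₂ := by
          have h3 : 2 ^ t₂ ≤ 2 ^ Nat.log 2 (b₂ - a₂) := Nat.pow_le_pow_right (by norm_num) ht₂
          have h4 : 2 ^ Nat.log 2 (b₂ - a₂) ≤ b₂ - a₂ :=
            Nat.pow_log_le_self 2 (by omega : b₂ - a₂ ≠ 0)
          omega
        have hS : {c | c ∈ Lset m (i+1) ∧ a' + 2 ^ t < c}.Nonempty :=
          ⟨b₂, lnbr_mem_right hleg₂, by omega⟩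
        set d := sInf {c | c ∈ Lset m (i+1) ∧ a' + 2 ^ t < c} with hd
        have hdmem := Nat.sInf_mem hS
        have hlegd : LNbr (Lset m (i+1)) (a' + 2 ^ t) d := by
          refine ⟨hdmem.2, ?_⟩
          ext x
          simp only [Set.mem_inter_iff, Set.mem_Icc, Set.mem_insert_iff, Set.mem_singleton_iff]
          constructor
          · rintro ⟨hxL, hx1, hx2⟩
            rcases eq_or_lt_of_le hx1 with h' | h'
            · exact Or.inl h'.symm
            · exact Or.inr (le_antisymm hx2 (Nat.sInf_le ⟨hxL, h'⟩))
          · rintro (rfl | rfl)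
            · exact ⟨hab' ▸ lnbr_mem_right hleg, le_refl _, hdmem.2.le⟩
            · exact ⟨hdmem.1, hdmem.2.le, le_refl _⟩
        obtain ⟨⟨r, hdr⟩, hd2⟩ := ih _ _ hlegd
        have hd2' : d ≤ 2 * (a' + 2 ^ t) := by rcases hd2 with h | h <;> omega
        have hsucc : a' + 2 ^ t + 1 ∈ Lset m (i+2) :=
          Or.inr ⟨a' + 2 ^ t, d, hlegd, 0, Nat.zero_le _, by norm_num⟩
        have := lnbr_le hab hsucc (by omega)
        have hb1 : b = a' + 2 ^ t + 1 := by omega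
        exact ⟨⟨0, by omega⟩, Or.inr (by omega)⟩
    -- case t < s
      · have hc : a' + 2 ^ (t+1) ∈ Lset m (i+2) :=
          Or.inr ⟨a', b', hleg, t+1, by rw [hlog]; omega, rfl⟩
        have hp1 : (2:ℕ) ^ (t+1) = 2 ^ t + 2 ^ t := by ring
        have hbc : b ≤ a' + 2 ^ (t+1) := lnbr_le hab hc (by omega)
        have hcb' : a' + 2 ^ (t+1) ≤ b' := by
          have : (2:ℕ) ^ (t+1) ≤ 2 ^ s := Nat.pow_le_pow_right (by norm_num) hts
          omega
        obtain ⟨u, hu, hbu⟩ := mem_interval m i hleg (lnbr_mem_right hab)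
          (by omega) (by omega)
        rw [hlog] at hu
        have hput : t < u := by
          have : (2:ℕ) ^ t < 2 ^ u := by omega
          exact (Nat.pow_lt_pow_iff_right (by norm_num : 1 < 2)).mp this
        have hput' : u ≤ t + 1 := by
          have : (2:ℕ) ^ u ≤ 2 ^ (t+1) := by omega
          exact (Nat.pow_le_pow_iff_right (by norm_num : 1 < 2)).mp this
        have hu' : u = t + 1 := by omega
        subst hu'
        exact ⟨⟨t, by omega⟩, Or.inr (by omega)⟩

/-- If `a` and `b` are `L^i`-neighbors (`a < b`), then `a = 0` or
`b ≤ 2a`; in particular, for `a ≥ 1` the gap `b - a` is at most `a`. -/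
theorem lset_neighbor_gap (m i a b : ℕ) (hi : 1 ≤ i) (hab : LNbr (Lset m i) a b) :
    (a = 0 ∨ b ≤ 2 * a) ∧ (1 ≤ a → b - a ≤ a) := by
  obtain ⟨j, rfl⟩ : ∃ j, i = j + 1 := ⟨i - 1, by omega⟩
  obtain ⟨-, h⟩ := lset_key m j a b hab
  refine ⟨h, fun ha => ?_⟩
  rcases h with rfl | h
  · omega
  · omega
end

section
/- In the layered ring graph LR^k(2^m), there exists a nearest-neighbor traversal (with respect to graph distance, starting at backbone vertex b_0) of total cost exactly (k+1)(2^m + 1) − 1. -/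
/-- The vertices of `LR^k(2^m)`, encoded as pairs `(i, t)`: `(0, t)` is the backbone
vertex `b_t` (for `t ≤ 2^m`), and `(i, t)` with `1 ≤ i ≤ k` is the layer vertex `ℓ^i_t`
(for `t ∈ L^i`). The position of `(i, t)` is `t`. -/
def LRVertexSet (m k : ℕ) : Set (ℕ × ℕ) :=
  {v | (v.1 = 0 ∧ v.2 ≤ 2 ^ m) ∨ (1 ≤ v.1 ∧ v.1 ≤ k ∧ v.2 ∈ Lset m v.1)}

/-- The layered ring graph `LR^k(2^m)`: two distinct vertices are adjacent iff their
positions differ by at most `1` modulo `2^m + 1`. -/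
def LRGraph (m k : ℕ) : SimpleGraph (LRVertexSet m k) :=
  SimpleGraph.fromRel
    (fun u v => (u.val.2 + 1) % (2 ^ m + 1) = v.val.2 % (2 ^ m + 1) ∨ u.val.2 = v.val.2)

/-!
For `i ≥ 1` the layer `L^i` consists of the positions `x ≤ 2^m` with at most `i` ones in
binary, and the graph distance between distinct vertices is `max 1` of the cyclic distance of
their positions. Visit the backbone, then the layers `k, k - 1, …, 1`, each by increasing
position. Inside layer `i` the successor of `a` is `a + 1` if `a` has fewer than `i` ones, and
`a + 2^v` if `a = 2^v (2c + 1)` has exactly `i` ones; in the latter case every position strictly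
between `a - 2^v` and `a + 2^v` has at least `i` ones, and more than `i` if it exceeds `a`, so
no unvisited vertex is closer. Every step costs exactly the increase of the visit time
`block * (2^m + 1) + position`, so the total cost telescopes to the visit time
`(k + 1)(2^m + 1) - 1` of the last vertex.
-/

namespace LayeredRing

def popcount (n : ℕ) : ℕ := (Nat.digits 2 n).sum

@[simp] lemma popcount_zero : popcount 0 = 0 := by simp [popcount]

@[simp] lemma popcount_one : popcount 1 = 1 := by simp [popcount]

lemma popcount_add_two_pow_mul {r s : ℕ} (hr : r < 2 ^ s) (c : ℕ) :
    popcount (r + 2 ^ s * c) = popcount r + popcount c := by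
  rcases Nat.eq_zero_or_pos c with rfl | hc
  · simp
  have hlen : (Nat.digits 2 r).length ≤ s := (Nat.digits_length_le_iff one_lt_two r).2 hr
  have h := Nat.digits_append_zeroes_append_digits (n := r) (k := s - (Nat.digits 2 r).length)
    one_lt_two hc
  rw [Nat.add_sub_cancel' hlen] at h
  simp [popcount, ← h]

lemma popcount_two_pow_mul (s c : ℕ) : popcount (2 ^ s * c) = popcount c := by
  simpa using popcount_add_two_pow_mul (Nat.two_pow_pos s) c

lemma popcount_two_pow (s : ℕ) : popcount (2 ^ s) = 1 := by
  simpa using popcount_two_pow_mul s 1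

lemma popcount_two_pow_mul_odd (v c : ℕ) : popcount (2 ^ v * (2 * c + 1)) = popcount c + 1 := by
  have : 2 * c + 1 = 1 + 2 ^ 1 * c := by ring
  rw [popcount_two_pow_mul, this, popcount_add_two_pow_mul (by norm_num), popcount_one, add_comm]

lemma exists_eq_two_pow_mul_two_mul_add_one {n : ℕ} (hn : n ≠ 0) :
    ∃ v c, n = 2 ^ v * (2 * c + 1) := by
  obtain ⟨v, q, ⟨c, rfl⟩, rfl⟩ := Nat.exists_eq_two_pow_mul_odd hn
  exact ⟨v, c, rfl⟩

lemma popcount_pos {n : ℕ} (hn : n ≠ 0) : 0 < popcount n := by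
  obtain ⟨v, c, rfl⟩ := exists_eq_two_pow_mul_two_mul_add_one hn
  rw [popcount_two_pow_mul_odd]
  omega

lemma popcount_succ_le (n : ℕ) : popcount (n + 1) ≤ popcount n + 1 := by
  obtain ⟨v, c, hn⟩ := exists_eq_two_pow_mul_two_mul_add_one n.add_one_ne_zero
  have hv := Nat.one_le_two_pow (n := v)
  have hsplit : n = (2 ^ v - 1) + 2 ^ (v + 1) * c := by
    have : 2 ^ v * (2 * c + 1) = 2 ^ v + 2 ^ (v + 1) * c := by ring
    omega
  rw [hn, popcount_two_pow_mul_odd, hsplit, popcount_add_two_pow_mul (by rw [pow_succ]; omega)]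
  omega

lemma popcount_add_two_pow_le (n t : ℕ) : popcount (n + 2 ^ t) ≤ popcount n + 1 := by
  have hmod := Nat.mod_lt n (Nat.two_pow_pos t)
  have hn : n + 2 ^ t = n % 2 ^ t + 2 ^ t * (n / 2 ^ t + 1) := by
    rw [mul_add, mul_one, ← add_assoc, Nat.mod_add_div]
  conv_rhs => rw [← Nat.mod_add_div n (2 ^ t)]
  rw [hn, popcount_add_two_pow_mul hmod, popcount_add_two_pow_mul hmod]
  have := popcount_succ_le (n / 2 ^ t)
  omega

lemma lnbr_iff {L : Set ℕ} {a b : ℕ} :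
    LNbr L a b ↔ a ∈ L ∧ b ∈ L ∧ a < b ∧ ∀ t, a < t → t < b → t ∉ L := by
  constructor
  · rintro ⟨hab, h⟩
    have mem (t : ℕ) : t ∈ L ∧ a ≤ t ∧ t ≤ b ↔ t = a ∨ t = b := by
      simpa using Set.ext_iff.1 h t
    refine ⟨((mem a).2 (Or.inl rfl)).1, ((mem b).2 (Or.inr rfl)).1, hab, fun t h₁ h₂ ht => ?_⟩
    rcases (mem t).1 ⟨ht, h₁.le, h₂.le⟩ with rfl | rfl <;> omega
  · rintro ⟨ha, hb, hab, hbetween⟩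
    refine ⟨hab, Set.ext fun t => ⟨fun ⟨ht, h₁, h₂⟩ => ?_, ?_⟩⟩
    · by_contra hne
      simp only [Set.mem_insert_iff, Set.mem_singleton_iff, not_or] at hne
      exact hbetween t (by omega) (by omega) ht
    · rintro (rfl | rfl)
      · exact ⟨ha, le_rfl, hab.le⟩
      · exact ⟨hb, hab.le, le_rfl⟩

lemma LNbr.right_unique {L : Set ℕ} {a b b' : ℕ} (h : LNbr L a b) (h' : LNbr L a b') :
    b = b' := by
  obtain ⟨-, hb, hab, hbetween⟩ := lnbr_iff.1 h
  obtain ⟨-, hb', hab', hbetween'⟩ := lnbr_iff.1 h'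
  by_contra hne
  rcases Nat.lt_or_gt_of_ne hne with hlt | hlt
  · exact hbetween' b hab hlt hb
  · exact hbetween b' hab' hlt hb'

lemma exists_lnbr_of_lt {L : Set ℕ} {x y : ℕ} (hx : x ∈ L) (hy : y ∈ L) (hyx : y < x) :
    ∃ a, LNbr L a x := by
  classical
  refine ⟨Nat.findGreatest (· ∈ L) (x - 1), lnbr_iff.2 ⟨?_, hx, ?_, fun t h₁ h₂ => ?_⟩⟩
  · exact Nat.findGreatest_spec (m := y) (by omega) hy
  · have := Nat.findGreatest_le (P := (· ∈ L)) (x - 1)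
    omega
  · exact Nat.findGreatest_is_greatest h₁ (by omega)

def popcountLE (m i : ℕ) : Set ℕ := {x | x ≤ 2 ^ m ∧ popcount x ≤ i}

lemma add_two_pow_le_of_dvd {a v m : ℕ} (hv : v ≤ m) (hdvd : 2 ^ v ∣ a) (ha : a < 2 ^ m) :
    a + 2 ^ v ≤ 2 ^ m := by
  have := Nat.le_of_dvd (by omega) (Nat.dvd_sub (pow_dvd_pow 2 hv) hdvd)
  omega

section LowBit

variable {a v c : ℕ}

lemma two_pow_le_of_eq_two_pow_mul_odd (ha : a = 2 ^ v * (2 * c + 1)) : 2 ^ v ≤ a := by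
  rw [ha]
  exact Nat.le_mul_of_pos_right _ (by omega)

lemma add_two_pow_le_of_eq_two_pow_mul_odd {m : ℕ} (ha : a = 2 ^ v * (2 * c + 1))
    (haN : a < 2 ^ m) : a + 2 ^ v ≤ 2 ^ m := by
  have hv := two_pow_le_of_eq_two_pow_mul_odd ha
  refine add_two_pow_le_of_dvd ?_ ⟨_, ha⟩ haN
  exact ((Nat.pow_lt_pow_iff_right (by norm_num)).1 (hv.trans_lt haN)).le

lemma popcount_add_two_pow_le_self (ha : a = 2 ^ v * (2 * c + 1)) :
    popcount (a + 2 ^ v) ≤ popcount a := by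
  have : a + 2 ^ v = 2 ^ (v + 1) * (c + 1) := by rw [ha]; ring
  rw [this, popcount_two_pow_mul, ha, popcount_two_pow_mul_odd]
  exact popcount_succ_le c

lemma popcount_lt_add (ha : a = 2 ^ v * (2 * c + 1)) {r : ℕ} (hr₀ : 0 < r) (hr : r < 2 ^ v) :
    popcount a < popcount (a + r) := by
  rw [add_comm, ha, popcount_add_two_pow_mul hr, popcount_two_pow_mul]
  have := popcount_pos hr₀.ne'
  omega

lemma popcount_le_sub_two_pow_add (ha : a = 2 ^ v * (2 * c + 1)) {r : ℕ} (hr₀ : 0 < r)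
    (hr : r < 2 ^ v) : popcount a ≤ popcount (a - 2 ^ v + r) := by
  have : a - 2 ^ v + r = r + 2 ^ (v + 1) * c := by rw [ha, pow_succ]; ring_nf; omega
  rw [this, popcount_add_two_pow_mul (by rw [pow_succ]; omega), ha, popcount_two_pow_mul_odd]
  have := popcount_pos hr₀.ne'
  omega

end LowBit

section Layers

variable {m i a : ℕ}

lemma lnbr_popcountLE_succ (hi : popcount a < i) (haN : a < 2 ^ m) :
    LNbr (popcountLE m i) a (a + 1) :=
  lnbr_iff.2 ⟨⟨haN.le, hi.le⟩, ⟨haN, (popcount_succ_le a).trans hi⟩, by omega,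
    fun t h₁ h₂ _ => by omega⟩

lemma lnbr_popcountLE_add_two_pow {v c : ℕ} (ha : a = 2 ^ v * (2 * c + 1))
    (hi : popcount a = i) (haN : a < 2 ^ m) : LNbr (popcountLE m i) a (a + 2 ^ v) := by
  refine lnbr_iff.2 ⟨⟨haN.le, hi.le⟩, ⟨add_two_pow_le_of_eq_two_pow_mul_odd ha haN,
    (popcount_add_two_pow_le_self ha).trans hi.le⟩, Nat.lt_add_of_pos_right (Nat.two_pow_pos v),
    fun t h₁ h₂ ht => ?_⟩
  have := popcount_lt_add ha (r := t - a) (by omega) (by omega)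
  rw [Nat.add_sub_cancel' h₁.le] at this
  exact absurd ht.2 (by omega)

lemma exists_lnbr_popcountLE (hi : 1 ≤ i) (ha : a ∈ popcountLE m i) (haN : a < 2 ^ m) :
    ∃ e, LNbr (popcountLE m i) a (a + 2 ^ e) := by
  rcases ha.2.lt_or_eq with hlt | heq
  · exact ⟨0, lnbr_popcountLE_succ hlt haN⟩
  · have ha₀ : a ≠ 0 := by rintro rfl; simp at heq; omega
    obtain ⟨v, c, hvc⟩ := exists_eq_two_pow_mul_two_mul_add_one ha₀
    exact ⟨v, lnbr_popcountLE_add_two_pow hvc heq haN⟩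

lemma lset_one : Lset m 1 = popcountLE m 1 := by
  ext x
  simp only [Lset, popcountLE, Set.mem_union, Set.mem_singleton_iff, Set.mem_ofPred_eq]
  constructor
  · rintro (rfl | ⟨t, ht, rfl⟩)
    · simp
    · exact ⟨Nat.pow_le_pow_right two_pos ht, (popcount_two_pow t).le⟩
  · rintro ⟨hxN, hx⟩
    rcases eq_or_ne x 0 with rfl | hx₀
    · exact Or.inl rfl
    obtain ⟨v, c, rfl⟩ := exists_eq_two_pow_mul_two_mul_add_one hx₀
    obtain rfl : c = 0 := by
      by_contra hc
      have := popcount_pos hc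
      rw [popcount_two_pow_mul_odd] at hx
      omega
    rw [mul_zero, zero_add, mul_one] at hxN ⊢
    exact Or.inr ⟨v, (Nat.pow_le_pow_iff_right one_lt_two).1 hxN, rfl⟩

lemma mem_popcountLE_succ_of_lnbr {b t : ℕ} (hab : LNbr (popcountLE m i) a b)
    (ht : t ≤ Nat.log 2 (b - a)) : a + 2 ^ t ∈ popcountLE m (i + 1) := by
  obtain ⟨ha, hb, hlt, -⟩ := lnbr_iff.1 hab
  have : 2 ^ t ≤ b - a := Nat.pow_le_of_le_log (by omega) ht
  exact ⟨by have := hb.1; omega, (popcount_add_two_pow_le a t).trans (by have := ha.2; omega)⟩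

lemma exists_lnbr_of_mem_popcountLE_succ {x : ℕ} (hi : 1 ≤ i) (hx : x ∈ popcountLE m (i + 1))
    (hx₀ : x ≠ 0) :
    ∃ a b, LNbr (popcountLE m i) a b ∧ ∃ t ≤ Nat.log 2 (b - a), x = a + 2 ^ t := by
  rcases le_or_gt (popcount x) i with hle | hlt
  · obtain ⟨a, hax⟩ := exists_lnbr_of_lt (L := popcountLE m i) ⟨hx.1, hle⟩
      ⟨Nat.zero_le _, by simp⟩ (Nat.pos_of_ne_zero hx₀)
    obtain ⟨ha, -, hlt, -⟩ := lnbr_iff.1 hax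
    obtain ⟨e, he⟩ := exists_lnbr_popcountLE hi ha (by have := hx.1; omega)
    obtain rfl := LNbr.right_unique he hax
    exact ⟨a, a + 2 ^ e, he, e, by simp [Nat.log_pow], rfl⟩
  · obtain ⟨hxN, hx⟩ := hx
    obtain ⟨v, c, rfl⟩ := exists_eq_two_pow_mul_two_mul_add_one hx₀
    rw [popcount_two_pow_mul_odd] at hx hlt
    have hxa : 2 ^ v * (2 * c + 1) = 2 ^ (v + 1) * c + 2 ^ v := by ring
    have hpa : popcount (2 ^ (v + 1) * c) = i := by rw [popcount_two_pow_mul]; omega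
    have haN : 2 ^ (v + 1) * c < 2 ^ m := by have := Nat.two_pow_pos v; omega
    obtain ⟨e, he⟩ := exists_lnbr_popcountLE hi ⟨haN.le, hpa.le⟩ haN
    refine ⟨_, _, he, v, ?_, hxa⟩
    rw [Nat.add_sub_cancel_left, Nat.log_pow one_lt_two]
    by_contra! hev
    have hmem := (lnbr_iff.1 he).2.1.2
    rw [add_comm, popcount_add_two_pow_mul (Nat.pow_lt_pow_right one_lt_two (by omega)),
      popcount_two_pow] at hmem
    omega

lemma lset_succ (hi : 1 ≤ i) (ih : Lset m i = popcountLE m i) :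
    Lset m (i + 1) = popcountLE m (i + 1) := by
  obtain ⟨j, rfl⟩ : ∃ j, i = j + 1 := ⟨i - 1, by omega⟩
  rw [Lset, ih]
  ext x
  simp only [Set.mem_union, Set.mem_singleton_iff, Set.mem_ofPred_eq]
  constructor
  · rintro (rfl | ⟨a, b, hab, t, ht, rfl⟩)
    · simp [popcountLE]
    · exact mem_popcountLE_succ_of_lnbr hab ht
  · intro hx
    rcases eq_or_ne x 0 with rfl | hx₀
    · exact Or.inl rfl
    · exact Or.inr (exists_lnbr_of_mem_popcountLE_succ hi hx hx₀)

lemma lset_eq (hi : 1 ≤ i) : Lset m i = popcountLE m i := by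
  induction i, hi using Nat.le_induction with
  | base => exact lset_one
  | succ i hi ih => exact lset_succ hi ih

end Layers

lemma mem_lrVertexSet_iff {m k : ℕ} {v : ℕ × ℕ} :
    v ∈ LRVertexSet m k ↔ v.1 ≤ k ∧ v.2 ≤ 2 ^ m ∧ (v.1 = 0 ∨ popcount v.2 ≤ v.1) := by
  simp only [LRVertexSet, Set.mem_ofPred_eq]
  constructor
  · rintro (⟨h₁, h₂⟩ | ⟨h₁, h₂, h₃⟩)
    · exact ⟨by omega, h₂, Or.inl h₁⟩
    · rw [lset_eq h₁] at h₃
      exact ⟨h₂, h₃.1, Or.inr h₃.2⟩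
  · rintro ⟨h₁, h₂, h₃ | h₃⟩
    · exact Or.inl ⟨h₃, h₂⟩
    · rcases Nat.eq_zero_or_pos v.1 with h₀ | h₀
      · exact Or.inl ⟨h₀, h₂⟩
      · exact Or.inr ⟨h₀, h₁, by rw [lset_eq h₀]; exact ⟨h₂, h₃⟩⟩

def ringDist (m p q : ℕ) : ℕ := min (p - q + (q - p)) (2 ^ m + 1 - (p - q + (q - p)))

lemma exists_ringDist_step {m p q : ℕ} (hp : p ≤ 2 ^ m) (hq : q ≤ 2 ^ m)
    (h : 2 ≤ ringDist m p q) :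
    ∃ p' ≤ 2 ^ m, ringDist m p p' = 1 ∧ ringDist m p' q + 1 = ringDist m p q := by
  -- one position along the shorter arc from `p` to `q`
  refine ⟨if (p < q ∧ 2 * (q - p) ≤ 2 ^ m + 1) ∨ (q < p ∧ 2 ^ m + 1 < 2 * (p - q)) then
    (if p = 2 ^ m then 0 else p + 1) else (if p = 0 then 2 ^ m else p - 1), ?_⟩
  unfold ringDist at *
  split_ifs <;> omega

section Distance

variable {m k : ℕ}

lemma snd_le_of_mem (v : LRVertexSet m k) : v.1.2 ≤ 2 ^ m := (mem_lrVertexSet_iff.1 v.2).2.1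

lemma add_one_mod_two_pow_add_one {p : ℕ} (hp : p ≤ 2 ^ m) :
    (p + 1) % (2 ^ m + 1) = if p = 2 ^ m then 0 else p + 1 := by
  split_ifs with h
  · rw [h, Nat.mod_self]
  · exact Nat.mod_eq_of_lt (by omega)

lemma lrGraph_adj_iff {u v : LRVertexSet m k} :
    (LRGraph m k).Adj u v ↔ u ≠ v ∧ ringDist m u.1.2 v.1.2 ≤ 1 := by
  have hu := snd_le_of_mem u
  have hv := snd_le_of_mem v
  rw [LRGraph, SimpleGraph.fromRel_adj, add_one_mod_two_pow_add_one hu,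
    add_one_mod_two_pow_add_one hv, Nat.mod_eq_of_lt (show u.1.2 < 2 ^ m + 1 by omega),
    Nat.mod_eq_of_lt (show v.1.2 < 2 ^ m + 1 by omega)]
  refine and_congr_right fun _ => ?_
  unfold ringDist
  split_ifs <;> omega

lemma ringDist_le_length {u v : LRVertexSet m k} (w : (LRGraph m k).Walk u v) :
    ringDist m u.1.2 v.1.2 ≤ w.length := by
  induction w with
  | nil => simp [ringDist]
  | @cons a b c h w ih =>
    have hab := (lrGraph_adj_iff.1 h).2
    have := snd_le_of_mem a
    have := snd_le_of_mem b
    have := snd_le_of_mem c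
    rw [SimpleGraph.Walk.length_cons]
    unfold ringDist at *
    omega

lemma exists_walk_length_le (d : ℕ) {u v : LRVertexSet m k} (huv : u ≠ v)
    (h : ringDist m u.1.2 v.1.2 ≤ d + 1) : ∃ w : (LRGraph m k).Walk u v, w.length ≤ d + 1 := by
  induction d generalizing u with
  | zero => exact ⟨(lrGraph_adj_iff.2 ⟨huv, h⟩).toWalk, by simp⟩
  | succ d ih =>
    by_cases h₁ : ringDist m u.1.2 v.1.2 ≤ 1
    · exact ⟨(lrGraph_adj_iff.2 ⟨huv, h₁⟩).toWalk, by simp⟩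
    obtain ⟨p, hp, hup, hpv⟩ :=
      exists_ringDist_step (snd_le_of_mem u) (snd_le_of_mem v) (by omega)
    let b : LRVertexSet m k := ⟨(0, p), mem_lrVertexSet_iff.2 ⟨Nat.zero_le k, hp, Or.inl rfl⟩⟩
    have hub : u ≠ b := fun h => by simp [h, b, ringDist] at hup
    have hbv : b ≠ v := by
      rintro rfl
      have : ringDist m p p = 0 := by simp [ringDist]
      simp only [b] at hpv h₁
      omega
    obtain ⟨w, hw⟩ := ih hbv (by simp only [b]; omega)
    exact ⟨.cons (lrGraph_adj_iff.2 ⟨hub, hup.le⟩) w, by simp; omega⟩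

lemma lrGraph_dist_eq {u v : LRVertexSet m k} (huv : u ≠ v) :
    (LRGraph m k).dist u v = max 1 (ringDist m u.1.2 v.1.2) := by
  obtain ⟨w, hw⟩ := exists_walk_length_le (ringDist m u.1.2 v.1.2 - 1) huv (by omega)
  have hreach : (LRGraph m k).Reachable u v := ⟨w⟩
  obtain ⟨w', hw'⟩ := hreach.exists_walk_length_eq_dist
  have := ringDist_le_length w'
  have := hreach.pos_dist_of_ne huv
  have := SimpleGraph.dist_le w
  omega

end Distance

lemma exists_enumeration_strictMono {α : Type*} [Finite α] [Nonempty α] (τ : α → ℕ)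
    (hτ : Function.Injective τ) :
    ∃ (n : ℕ) (g : ℕ → α), (∀ x, ∃ j < n, g j = x) ∧
      ∀ {i j}, i < n → j < n → (τ (g i) < τ (g j) ↔ i < j) := by
  have hf : (Set.ofPred (· ∈ Set.range τ)).Finite := Set.finite_range τ
  let g : ℕ → α := fun j => Function.invFun τ (Nat.nth (· ∈ Set.range τ) j)
  have hτg {j} (hj : j < hf.toFinset.card) : τ (g j) = Nat.nth (· ∈ Set.range τ) j :=
    Function.invFun_eq (Nat.nth_mem_of_lt_card hf hj)
  refine ⟨hf.toFinset.card, g, fun x => ?_, fun hi hj => ?_⟩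
  · obtain ⟨j, hj, hjx⟩ := Nat.exists_lt_card_finite_nth_eq hf (Set.mem_range_self x)
    exact ⟨j, hj, hτ (by rw [hτg hj, hjx])⟩
  · rw [hτg hi, hτg hj]
    exact ⟨(Nat.lt_of_nth_lt_nth_of_lt_card hf · hi), (Nat.nth_lt_nth_of_lt_card hf · hj)⟩

open Finset in
theorem exists_greedy_traversal {α : Type*} [Finite α] (τ : α → ℕ) (hτ : Function.Injective τ)
    (d : α → α → ℕ) {x₀ xₘ : α} (h₀ : ∀ v, τ x₀ ≤ τ v) (hₘ : ∀ v, τ v ≤ τ xₘ)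
    (hstep : ∀ u w, τ u < τ w → (∀ v, τ u < τ v → τ w ≤ τ v) →
      d u w = τ w - τ u ∧ ∀ x, τ u < τ x → d u w ≤ d u x) :
    ∃ (n : ℕ) (g : ℕ → α), Function.Bijective (fun i : Fin n => g i) ∧ g 0 = x₀ ∧
      (∀ i, i + 1 < n → ∀ x, (∀ t, t ≤ i → g t ≠ x) → d (g i) (g (i + 1)) ≤ d (g i) x) ∧
      ∑ i ∈ range (n - 1), d (g i) (g (i + 1)) = τ xₘ - τ x₀ := by
  have : Nonempty α := ⟨x₀⟩
  obtain ⟨n, g, hsurj, hlt⟩ := exists_enumeration_strictMono τ hτ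
  obtain ⟨j₀, hj₀, hgj₀⟩ := hsurj x₀
  obtain ⟨jₘ, hjₘ, hgjₘ⟩ := hsurj xₘ
  have hg₀ : g 0 = x₀ := hτ <| le_antisymm
    (not_lt.1 fun h => absurd ((hlt hj₀ (by omega)).1 (hgj₀ ▸ h)) (by omega)) (h₀ _)
  have hgₘ : g (n - 1) = xₘ := hτ <| le_antisymm (hₘ _)
    (not_lt.1 fun h => absurd ((hlt (by omega) hjₘ).1 (hgjₘ ▸ h)) (by omega))
  have hconsec {i} (hi : i + 1 < n) : d (g i) (g (i + 1)) = τ (g (i + 1)) - τ (g i) ∧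
      ∀ x, τ (g i) < τ x → d (g i) (g (i + 1)) ≤ d (g i) x := by
    refine hstep _ _ ((hlt (by omega) hi).2 (by omega)) fun v hv => ?_
    obtain ⟨j, hj, rfl⟩ := hsurj v
    have := (hlt (by omega) hj).1 hv
    exact not_lt.1 fun h => absurd ((hlt hj hi).1 h) (by omega)
  refine ⟨n, g, ⟨fun i j hij => Fin.ext ?_, fun x => ?_⟩, hg₀, fun i hi x hx => ?_, ?_⟩
  · by_contra hne
    rcases Nat.lt_or_gt_of_ne hne with h | h
    · exact ((hlt i.2 j.2).2 h).ne (congrArg τ hij)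
    · exact ((hlt j.2 i.2).2 h).ne (congrArg τ hij.symm)
  · obtain ⟨j, hj, rfl⟩ := hsurj x
    exact ⟨⟨j, hj⟩, rfl⟩
  · obtain ⟨j, hj, rfl⟩ := hsurj x
    have hij : i < j := not_le.1 fun h => hx j h rfl
    exact (hconsec hi).2 _ ((hlt (by omega) hj).2 hij)
  · have htelescope (j) (hj : j < n) :
        ∑ i ∈ range j, d (g i) (g (i + 1)) = τ (g j) - τ (g 0) := by
      induction j with
      | zero => simp
      | succ j ih =>
        have h₁ := (hlt (by omega) hj).2 (Nat.lt_succ_self j)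
        have h₂ := hg₀ ▸ h₀ (g j)
        rw [sum_range_succ, ih (by omega), (hconsec hj).1]
        omega
    rw [htelescope (n - 1) (by omega), hgₘ, hg₀]

lemma mul_add_lt_mul_add_iff {P b b' p q : ℕ} (hp : p < P) (hq : q < P) :
    b * P + p < b' * P + q ↔ b < b' ∨ b = b' ∧ p < q := by
  constructor
  · intro h
    rcases lt_trichotomy b b' with hb | rfl | hb
    · exact Or.inl hb
    · exact Or.inr ⟨rfl, by omega⟩
    · have := Nat.mul_le_mul_right P (Nat.succ_le_of_lt hb)
      rw [Nat.succ_mul] at this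
      omega
  · rintro (hb | ⟨rfl, h⟩)
    · have := Nat.mul_le_mul_right P (Nat.succ_le_of_lt hb)
      rw [Nat.succ_mul] at this
      omega
    · omega

section VisitTime

variable {m k : ℕ}

def block (k i : ℕ) : ℕ := if i = 0 then 0 else k + 1 - i

/-- The time at which the greedy traversal visits `v`: first the backbone, then the layers
`k, k - 1, …, 1`, each in order of increasing position. -/
def visitTime (m k : ℕ) (v : ℕ × ℕ) : ℕ := block k v.1 * (2 ^ m + 1) + v.2

lemma block_le (i : ℕ) : block k i ≤ k := by
  unfold block
  split_ifs <;> omega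

lemma visitTime_lt_visitTime_iff {u v : ℕ × ℕ} (hu : u ∈ LRVertexSet m k)
    (hv : v ∈ LRVertexSet m k) : visitTime m k u < visitTime m k v ↔
      block k u.1 < block k v.1 ∨ block k u.1 = block k v.1 ∧ u.2 < v.2 :=
  mul_add_lt_mul_add_iff (Nat.lt_succ_of_le (mem_lrVertexSet_iff.1 hu).2.1)
    (Nat.lt_succ_of_le (mem_lrVertexSet_iff.1 hv).2.1)

lemma visitTime_injOn : Set.InjOn (visitTime m k) (LRVertexSet m k) := by
  intro u hu v hv h
  have h₁ := (visitTime_lt_visitTime_iff hu hv).not.1 h.not_lt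
  have h₂ := (visitTime_lt_visitTime_iff hv hu).not.1 h.not_gt
  have hu' := mem_lrVertexSet_iff.1 hu
  have hv' := mem_lrVertexSet_iff.1 hv
  unfold block at h₁ h₂
  ext <;> split_ifs at h₁ h₂ <;> omega

def IsGreedyStep (m k : ℕ) (u s : ℕ × ℕ) : Prop :=
  s ∈ LRVertexSet m k ∧ visitTime m k u < visitTime m k s ∧
    (∀ v ∈ LRVertexSet m k, visitTime m k u < visitTime m k v →
      visitTime m k s ≤ visitTime m k v) ∧
    max 1 (ringDist m u.2 s.2) = visitTime m k s - visitTime m k u ∧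
    ∀ x ∈ LRVertexSet m k, visitTime m k u < visitTime m k x →
      visitTime m k s - visitTime m k u ≤ max 1 (ringDist m u.2 x.2)

lemma isGreedyStep_of_visitTime_eq_add_one {u s : ℕ × ℕ} (hs : s ∈ LRVertexSet m k)
    (hτ : visitTime m k s = visitTime m k u + 1) (hd : ringDist m u.2 s.2 ≤ 1) :
    IsGreedyStep m k u s :=
  ⟨hs, by omega, fun _ _ _ => by omega, by omega, fun _ _ _ => by omega⟩

lemma isGreedyStep_end_of_block {u w : ℕ × ℕ} (hu : u ∈ LRVertexSet m k)
    (hw : w ∈ LRVertexSet m k) (huw : visitTime m k u < visitTime m k w) (hN : u.2 = 2 ^ m) :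
    IsGreedyStep m k u (k - block k u.1, 0) := by
  have hlt : block k u.1 < k := by
    have := block_le (k := k) w.1
    have := (mem_lrVertexSet_iff.1 hw).2.1
    rcases (visitTime_lt_visitTime_iff hu hw).1 huw with h | h <;> omega
  refine isGreedyStep_of_visitTime_eq_add_one (mem_lrVertexSet_iff.2 ⟨by omega, by simp, by simp⟩)
    ?_ (by simp [hN, ringDist])
  have hblock : block k (k - block k u.1) = block k u.1 + 1 := by
    simp only [block] at hlt ⊢
    split_ifs at hlt ⊢ <;> omega
  simp only [visitTime, hblock, hN]
  ring

lemma isGreedyStep_add_one {u : ℕ × ℕ} (hu : u ∈ LRVertexSet m k) (hN : u.2 < 2 ^ m)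
    (hi : u.1 = 0 ∨ popcount u.2 < u.1) : IsGreedyStep m k u (u.1, u.2 + 1) := by
  have hu' := mem_lrVertexSet_iff.1 hu
  refine isGreedyStep_of_visitTime_eq_add_one (mem_lrVertexSet_iff.2 ⟨hu'.1, hN, ?_⟩)
    (by simp [visitTime]; ring) (by simp [ringDist])
  have := popcount_succ_le u.2
  dsimp only
  omega

lemma far_of_visitTime_lt {i a v c : ℕ} (hu : (i, a) ∈ LRVertexSet m k)
    (hi : popcount a = i) (ha : a = 2 ^ v * (2 * c + 1)) {x : ℕ × ℕ}
    (hx : x ∈ LRVertexSet m k) (hux : visitTime m k (i, a) < visitTime m k x) :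
    block k x.1 = block k i ∧ a + 2 ^ v ≤ x.2 ∨
      block k i < block k x.1 ∧ (x.2 + 2 ^ v ≤ a ∨ a + 2 ^ v ≤ x.2) := by
  have hu' : i ≤ k := (mem_lrVertexSet_iff.1 hu).1
  have hx' := mem_lrVertexSet_iff.1 hx
  have hva := two_pow_le_of_eq_two_pow_mul_odd ha
  have hi₀ : i ≠ 0 := by
    have := popcount_pos (n := a) (by rw [ha]; positivity)
    omega
  have hright (hax : a < x.2) (hxa : x.2 < a + 2 ^ v) : i < popcount x.2 := by
    have := popcount_lt_add ha (r := x.2 - a) (by omega) (by omega)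
    rwa [Nat.add_sub_cancel' hax.le, hi] at this
  rcases (visitTime_lt_visitTime_iff hu hx).1 hux with hb | ⟨hb, hax⟩
  · refine Or.inr ⟨hb, ?_⟩
    have hxi : x.1 ≠ 0 ∧ x.1 < i := by
      simp only [block] at hb
      split_ifs at hb <;> omega
    by_contra! hnear
    rcases lt_trichotomy x.2 a with hxa | rfl | hax
    · have := popcount_le_sub_two_pow_add ha (r := x.2 - (a - 2 ^ v)) (by omega) (by omega)
      rw [Nat.add_sub_cancel' (by omega)] at this
      omega
    · omega
    · have := hright hax (by omega)
      omega
  · refine Or.inl ⟨hb.symm, not_lt.1 fun hxa => ?_⟩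
    have hxi : x.1 = i := by
      simp only [block] at hb
      split_ifs at hb <;> omega
    have := hright hax hxa
    omega

lemma isGreedyStep_add_two_pow {i a v c : ℕ} (hu : (i, a) ∈ LRVertexSet m k) (hN : a < 2 ^ m)
    (hi : popcount a = i) (ha : a = 2 ^ v * (2 * c + 1)) :
    IsGreedyStep m k (i, a) (i, a + 2 ^ v) := by
  have hv := Nat.two_pow_pos v
  have hva := two_pow_le_of_eq_two_pow_mul_odd ha
  have haN := add_two_pow_le_of_eq_two_pow_mul_odd ha hN
  have hs : (i, a + 2 ^ v) ∈ LRVertexSet m k := mem_lrVertexSet_iff.2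
    ⟨(mem_lrVertexSet_iff.1 hu).1, haN, Or.inr ((popcount_add_two_pow_le_self ha).trans hi.le)⟩
  have hτ : visitTime m k (i, a + 2 ^ v) = visitTime m k (i, a) + 2 ^ v := by
    simp only [visitTime]
    ring
  refine ⟨hs, by omega, fun x hx hux => not_lt.1 fun hxs => ?_, ?_, fun x hx hux => ?_⟩
  · rcases far_of_visitTime_lt hu hi ha hx hux with ⟨hb, hpos⟩ | ⟨hb, -⟩ <;>
      rcases (visitTime_lt_visitTime_iff hx hs).1 hxs with h | h <;> dsimp only at h <;> omega
  · rw [hτ]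
    simp only [ringDist]
    omega
  · have := (mem_lrVertexSet_iff.1 hx).2.1
    rw [hτ]
    simp only [ringDist]
    rcases far_of_visitTime_lt hu hi ha hx hux with h | h <;> omega

lemma exists_isGreedyStep {u w : ℕ × ℕ} (hu : u ∈ LRVertexSet m k) (hw : w ∈ LRVertexSet m k)
    (huw : visitTime m k u < visitTime m k w) : ∃ s, IsGreedyStep m k u s := by
  obtain ⟨i, a⟩ := u
  have hu' : i ≤ k ∧ a ≤ 2 ^ m ∧ (i = 0 ∨ popcount a ≤ i) := mem_lrVertexSet_iff.1 hu
  rcases hu'.2.1.lt_or_eq with hN | hN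
  · by_cases h : i = 0 ∨ popcount a < i
    · exact ⟨_, isGreedyStep_add_one hu hN h⟩
    have hpa : popcount a = i := by omega
    have ha₀ : a ≠ 0 := by rintro rfl; simp at hpa; omega
    obtain ⟨v, c, hvc⟩ := exists_eq_two_pow_mul_two_mul_add_one ha₀
    exact ⟨_, isGreedyStep_add_two_pow hu hN hpa hvc⟩
  · exact ⟨_, isGreedyStep_end_of_block hu hw huw hN⟩

lemma lrGraph_dist_of_visitTime_succ (u w : LRVertexSet m k)
    (huw : visitTime m k u < visitTime m k w)
    (hmin : ∀ v : LRVertexSet m k, visitTime m k u < visitTime m k v →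
      visitTime m k w ≤ visitTime m k v) :
    (LRGraph m k).dist u w = visitTime m k w - visitTime m k u ∧
      ∀ x : LRVertexSet m k, visitTime m k u < visitTime m k x →
        (LRGraph m k).dist u w ≤ (LRGraph m k).dist u x := by
  obtain ⟨s, hs, hus, hsmin, hcost, hnear⟩ := exists_isGreedyStep u.2 w.2 huw
  obtain rfl : s = w := visitTime_injOn hs w.2 (le_antisymm (hsmin _ w.2 huw) (hmin ⟨s, hs⟩ hus))
  have hne {x : LRVertexSet m k} (hx : visitTime m k u < visitTime m k x) : u ≠ x := by
    rintro rfl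
    exact hx.false
  refine ⟨(lrGraph_dist_eq (hne huw)).trans hcost, fun x hx => ?_⟩
  rw [lrGraph_dist_eq (hne huw), lrGraph_dist_eq (hne hx), hcost]
  exact hnear x x.2 hx

lemma lrVertexSet_finite : (LRVertexSet m k).Finite :=
  ((Set.finite_Iic k).prod (Set.finite_Iic (2 ^ m))).subset fun _ hv =>
    ⟨(mem_lrVertexSet_iff.1 hv).1, (mem_lrVertexSet_iff.1 hv).2.1⟩

lemma visitTime_le_of_mem {v : ℕ × ℕ} (hv : v ∈ LRVertexSet m k) :
    visitTime m k v ≤ (k + 1) * (2 ^ m + 1) - 1 := by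
  have := Nat.mul_le_mul_right (2 ^ m + 1) (block_le (k := k) v.1)
  have := (mem_lrVertexSet_iff.1 hv).2.1
  rw [visitTime, add_mul, one_mul]
  omega

lemma visitTime_last : visitTime m k (min k 1, 2 ^ m) = (k + 1) * (2 ^ m + 1) - 1 := by
  have : block k (min k 1) = k := by
    simp only [block]
    split_ifs <;> omega
  rw [visitTime, this, add_mul, one_mul, ← add_assoc, Nat.add_sub_cancel]

end VisitTime

end LayeredRing

open LayeredRing in
theorem lr_nn_traversal_cost_general (m k : ℕ) :
    ∃ (n : ℕ) (g : ℕ → LRVertexSet m k),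
      Function.Bijective (fun i : Fin n => g i) ∧
      (g 0).val = (0, 0) ∧
      (∀ i : ℕ, i + 1 < n → ∀ x : LRVertexSet m k, (∀ t : ℕ, t ≤ i → g t ≠ x) →
        (LRGraph m k).dist (g i) (g (i + 1)) ≤ (LRGraph m k).dist (g i) x) ∧
      ∑ i ∈ Finset.range (n - 1), (LRGraph m k).dist (g i) (g (i + 1)) =
        (k + 1) * (2 ^ m + 1) - 1 := by
  have := (lrVertexSet_finite (m := m) (k := k)).to_subtype
  let first : LRVertexSet m k := ⟨(0, 0), mem_lrVertexSet_iff.2 ⟨by simp, by simp, by simp⟩⟩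
  let last : LRVertexSet m k :=
    ⟨(min k 1, 2 ^ m), mem_lrVertexSet_iff.2 ⟨by omega, le_rfl, by rw [popcount_two_pow]; omega⟩⟩
  obtain ⟨n, g, hbij, hfirst, hgreedy, hcost⟩ :=
    exists_greedy_traversal (fun v : LRVertexSet m k => visitTime m k v)
      (fun u v h => Subtype.ext (visitTime_injOn u.2 v.2 h)) (LRGraph m k).dist
      (x₀ := first) (xₘ := last) (fun _ => by simp [first, visitTime, block])
      (fun v => visitTime_last ▸ visitTime_le_of_mem v.2) lrGraph_dist_of_visitTime_succ
  refine ⟨n, g, hbij, by rw [hfirst], hgreedy, ?_⟩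
  rw [hcost, visitTime_last]
  simp [first, visitTime, block]

/-- In the layered ring graph `LR^k(2^m)` (`m ≥ 1`) there is a
nearest-neighbor traversal with respect to graph distance, starting at the backbone
vertex `b_0`, whose total cost (sum of distances between consecutive visited vertices)
is exactly `(k+1) * (2^m + 1) - 1`. -/
theorem lr_nn_traversal_cost (m k : ℕ) (hm : 1 ≤ m) :
    ∃ (n : ℕ) (g : ℕ → LRVertexSet m k),
      Function.Bijective (fun i : Fin n => g i) ∧
      (g 0).val = (0, 0) ∧
      (∀ i : ℕ, i + 1 < n → ∀ x : LRVertexSet m k, (∀ t : ℕ, t ≤ i → g t ≠ x) →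
        (LRGraph m k).dist (g i) (g (i + 1)) ≤ (LRGraph m k).dist (g i) x) ∧
      ∑ i ∈ Finset.range (n - 1), (LRGraph m k).dist (g i) (g (i + 1)) =
        (k + 1) * (2 ^ m + 1) - 1 :=
  lr_nn_traversal_cost_general m k
end

section
/- Let S(k,t) satisfy: S(1,0) = 2, S(1,t) = 1 for 1 ≤ t ≤ m−1; for k > 1 and t > 0, S(k,t) = Σ_{u > t} S(k−1, u); and for k > 1, S(k,0) = S(k−1,0) + 2·Σ_{u > 0} S(k−1, u). Then S(k,t) = C(m−t−1, k−1) for t > 0, and S(k,0) = 2·Σ_{i=0}^{k−1} C(m−1, i). -/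
open Finset

lemma hockey (r : ℕ) : ∀ N, ∑ j ∈ Finset.range N, j.choose r = N.choose (r + 1) := by
  intro N
  induction N with
  | zero => simp
  | succ n ih =>
      rw [Finset.sum_range_succ, ih, Nat.add_comm, ← Nat.choose_succ_succ]

lemma reindex (m t r : ℕ) (ht : t ≤ m - 1) :
    ∑ u ∈ Finset.Icc (t + 1) (m - 1), (m - u - 1).choose r
      = (m - t - 1).choose (r + 1) := by
  have e : m - t - 1 = m - 1 - t := by omega
  rw [e, ← hockey r (m - 1 - t)]
  · rw [Finset.sum_nbij' (i := fun u => m - 1 - u) (j := fun v => m - 1 - v)]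
    · intro u hu; simp only [Finset.mem_Icc] at hu; simp only [Finset.mem_range]; omega
    · intro v hv; simp only [Finset.mem_range] at hv; simp only [Finset.mem_Icc]; omega
    · intro u hu; simp only [Finset.mem_Icc] at hu; omega
    · intro v hv; simp only [Finset.mem_range] at hv; omega
    · intro u hu; simp only [Finset.mem_Icc] at hu
      congr 1; omega
  

/-- If `S` satisfies the leg-counting recurrence of the layered ring
graphs (`S 1 0 = 2`, `S 1 t = 1` for `1 ≤ t ≤ m - 1`, `S k t = ∑_{u > t} S (k-1) u` for
`k > 1, t > 0`, and `S k 0 = S (k-1) 0 + 2 ∑_{u > 0} S (k-1) u` for `k > 1`), then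
`S k t = C(m - t - 1, k - 1)` for `t > 0` and `S k 0 = 2 ∑_{i=0}^{k-1} C(m - 1, i)`. -/
theorem leg_count_formula (m : ℕ) (hm : 1 ≤ m) (S : ℕ → ℕ → ℕ)
    (h10 : S 1 0 = 2)
    (h1t : ∀ t : ℕ, 1 ≤ t → t ≤ m - 1 → S 1 t = 1)
    (hkt : ∀ k t : ℕ, 1 < k → 0 < t → t ≤ m - 1 →
      S k t = ∑ u ∈ Finset.Icc (t + 1) (m - 1), S (k - 1) u)
    (hk0 : ∀ k : ℕ, 1 < k →
      S k 0 = S (k - 1) 0 + 2 * ∑ u ∈ Finset.Icc 1 (m - 1), S (k - 1) u) :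
    ∀ k : ℕ, 1 ≤ k →
      (∀ t : ℕ, 0 < t → t ≤ m - 1 → S k t = Nat.choose (m - t - 1) (k - 1)) ∧
      S k 0 = 2 * ∑ i ∈ Finset.range k, Nat.choose (m - 1) i := by
  intro k
  induction k with
  | zero => omega
  | succ n ih =>
      intro _
      rcases Nat.eq_or_lt_of_le (Nat.one_le_iff_ne_zero.mpr (Nat.succ_ne_zero n)) with h1 | h1
      · -- n + 1 = 1
        have hn : n = 0 := by omega
        subst hn
        refine ⟨fun t ht1 ht2 => ?_, ?_⟩
        · rw [h1t t ht1 ht2]; simp [Nat.choose_zero_right]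
        · simpa using h10
      · -- n + 1 > 1, so n ≥ 1
        have hn1 : 1 ≤ n := by omega
        obtain ⟨iht, ih0⟩ := ih hn1
        have key : ∀ t, t ≤ m - 1 →
            ∑ u ∈ Finset.Icc (t + 1) (m - 1), S n u = (m - t - 1).choose n := by
          intro t ht
          have : ∑ u ∈ Finset.Icc (t + 1) (m - 1), S n u
              = ∑ u ∈ Finset.Icc (t + 1) (m - 1), (m - u - 1).choose (n - 1) := by
            apply Finset.sum_congr rfl
            intro u hu
            simp only [Finset.mem_Icc] at hu
            exact iht u (by omega) hu.2
          rw [this, reindex m t (n - 1) ht]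
          congr 1; omega
        constructor
        · intro t ht1 ht2
          rw [hkt (n + 1) t h1 ht1 ht2]
          simp only [Nat.add_sub_cancel]
          exact key t ht2
        · rw [hk0 (n + 1) h1]
          simp only [Nat.add_sub_cancel]
          have h0le : (0 : ℕ) ≤ m - 1 := Nat.zero_le _
          have := key 0 h0le
          simp only [Nat.sub_zero, zero_add] at this
          rw [this, ih0, Finset.sum_range_succ]
          ring
end

section
/- In the distributed nearest-neighbor algorithm on an n-node graph with adversarial edge deletions, the value v.dist stored at each node v is nondecreasing over time. -/
open scoped Classical

/-- The state of the distributed nearest-neighbor algorithm: the current (shrinking)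
network, the distance estimates `dist`, the visited flags `vis`, and the agent position. -/
structure NNState (V : Type*) where
  graph : SimpleGraph V
  dist : V → ℕ
  vis : V → Prop
  pos : V

/-- The parallel distance update: each visited node `v` sets
`v.dist := 1 + min {u.dist : u = v or uv ∈ E}`; unvisited nodes keep their value. -/
noncomputable def NNUpdate {V : Type*} (s : NNState V) : V → ℕ := fun v =>
  if s.vis v then 1 + sInf {x : ℕ | ∃ u, (u = v ∨ s.graph.Adj v u) ∧ s.dist u = x}
  else s.dist v

/-- One iteration of the distributed NN algorithm: distances are updated in parallel,
then the agent moves to a neighbor `u` with `u.dist < pos.dist` (if one exists, marking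
it visited; otherwise it stays put), and finally the adversary may delete some edges. -/
def NNStep {V : Type*} (s s' : NNState V) : Prop :=
  s'.dist = NNUpdate s ∧
  ((∃ u, s.graph.Adj s.pos u ∧ NNUpdate s u < NNUpdate s s.pos ∧
      s'.pos = u ∧ s'.vis = fun w => s.vis w ∨ w = u) ∨
    ((¬ ∃ u, s.graph.Adj s.pos u ∧ NNUpdate s u < NNUpdate s s.pos) ∧
      s'.pos = s.pos ∧ s'.vis = s.vis)) ∧
  s'.graph ≤ s.graph

/-- The initial state: all distance estimates are `0`, and only the agent's initial
position is visited. -/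
def NNInit {V : Type*} (s : NNState V) (v0 : V) : Prop :=
  s.dist = (fun _ => 0) ∧ s.pos = v0 ∧ s.vis = (fun w => w = v0)

/-- Remark R1. Along any run of the distributed nearest-neighbor
algorithm with adversarial edge deletions, each node's value `v.dist` is nondecreasing
over time. -/
theorem nn_dist_monotone {V : Type*} [Fintype V] (s : ℕ → NNState V) (v0 : V)
    (hinit : NNInit (s 0) v0) (hstep : ∀ t, NNStep (s t) (s (t + 1))) :
    ∀ (v : V) (t : ℕ), (s t).dist v ≤ (s (t + 1)).dist v := by
  -- visited flags are monotone
  have hvis : ∀ t v, (s t).vis v → (s (t + 1)).vis v := by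
    intro t v hv
    rcases (hstep t).2.1 with ⟨u, _, _, _, he⟩ | ⟨_, _, he⟩
    · rw [he]; exact Or.inl hv
    · rw [he]; exact hv
  -- unvisited nodes have dist 0
  have hzero : ∀ t v, ¬ (s t).vis v → (s t).dist v = 0 := by
    intro t
    induction t with
    | zero => intro v _; rw [hinit.1]
    | succ t ih =>
      intro v hv
      have hv' : ¬ (s t).vis v := fun h => hv (hvis t v h)
      rw [(hstep t).1, NNUpdate, if_neg hv']
      exact ih v hv'
  suffices h : ∀ (t : ℕ) (v : V), (s t).dist v ≤ (s (t + 1)).dist v from fun v t => h t v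
  intro t
  induction t using Nat.strong_induction_on with
  | _ t IH =>
    intro v
    rcases t with _ | t
    · simp [hinit.1]
    · -- show dist at t+1 ≤ dist at t+2
      rw [(hstep (t + 1)).1, NNUpdate]
      by_cases hv : (s (t + 1)).vis v
      · rw [if_pos hv]
        by_cases hvt : (s t).vis v
        · have hd : (s (t + 1)).dist v
              = 1 + sInf {x : ℕ | ∃ u, (u = v ∨ (s t).graph.Adj v u) ∧ (s t).dist u = x} := by
            rw [(hstep t).1, NNUpdate, if_pos hvt]
          rw [hd]
          have hne : {x : ℕ | ∃ u, (u = v ∨ (s (t + 1)).graph.Adj v u) ∧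
              (s (t + 1)).dist u = x}.Nonempty :=
            ⟨(s (t + 1)).dist v, v, Or.inl rfl, rfl⟩
          refine Nat.add_le_add_left (le_csInf hne ?_) 1
          rintro x ⟨u, hu, rfl⟩
          have hu' : u = v ∨ (s t).graph.Adj v u := by
            rcases hu with h | h
            · exact Or.inl h
            · exact Or.inr ((hstep t).2.2 h)
          exact le_trans (Nat.sInf_le ⟨u, hu', rfl⟩) (IH t (Nat.lt_succ_self t) u)
        · have : (s (t + 1)).dist v = 0 := by
            rw [(hstep t).1, NNUpdate, if_neg hvt]
            exact hzero t v hvt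
          rw [this]; exact Nat.zero_le _
      · rw [if_neg hv]
end

section
/- In the distributed nearest-neighbor algorithm, at all times each node's estimate v.dist is at most the actual graph distance from v to the closest unvisited node (in the current graph). -/
open scoped Classical

private lemma nn_update_le {V : Type*} (st : NNState V)
    (ih : ∀ v u, ¬ st.vis u → st.graph.Reachable v u → st.dist v ≤ st.graph.dist v u) :
    ∀ v u, ¬ st.vis u → st.graph.Reachable v u → NNUpdate st v ≤ st.graph.dist v u := by
  intro v u hu hr
  unfold NNUpdate
  by_cases hv : st.vis v
  · simp only [hv, if_true]
    have hne : v ≠ u := fun h => hu (h ▸ hv)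
    obtain ⟨p, hp⟩ := hr.exists_walk_length_eq_dist
    cases p with
    | nil => exact absurd rfl hne
    | cons hadj q =>
      rename_i w
      have h1 : sInf {x : ℕ | ∃ u', (u' = v ∨ st.graph.Adj v u') ∧ st.dist u' = x}
          ≤ st.dist w := Nat.sInf_le ⟨w, Or.inr hadj, rfl⟩
      have h2 : st.dist w ≤ st.graph.dist w u := ih w u hu q.reachable
      have h3 : st.graph.dist w u ≤ q.length := SimpleGraph.dist_le q
      have : 1 + q.length = st.graph.dist v u := by
        simpa [SimpleGraph.Walk.length_cons, Nat.add_comm] using hp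
      omega
  · simp only [hv, if_false]
    exact ih v u hu hr

/-- Remark R2. At all times, each node's estimate `v.dist` is at most
the actual distance (in the current graph) from `v` to any unvisited node; in particular
it is at most the distance to the closest unvisited node, and the claim is vacuous when
no unvisited node is reachable. -/
theorem nn_dist_le_true_dist {V : Type*} [Fintype V] (s : ℕ → NNState V) (v0 : V)
    (hinit : NNInit (s 0) v0) (hstep : ∀ t, NNStep (s t) (s (t + 1))) :
    ∀ (t : ℕ) (v u : V), ¬ (s t).vis u → (s t).graph.Reachable v u →
      (s t).dist v ≤ (s t).graph.dist v u := by
  intro t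
  induction t with
  | zero =>
    intro v u _ _
    rw [hinit.1]
    exact Nat.zero_le _
  | succ t ih =>
    intro v u hu' hr'
    obtain ⟨hdist, hmove, hsub⟩ := hstep t
    have hr : (s t).graph.Reachable v u := hr'.mono hsub
    have hu : ¬ (s t).vis u := by
      rcases hmove with ⟨w, _, _, _, hvis⟩ | ⟨_, _, hvis⟩
      · rw [hvis] at hu'; exact fun h => hu' (Or.inl h)
      · rwa [hvis] at hu'
    have h1 : NNUpdate (s t) v ≤ (s t).graph.dist v u := nn_update_le (s t) ih v u hu hr
    have h2 : (s t).graph.dist v u ≤ (s (t+1)).graph.dist v u := by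
      obtain ⟨p, hp⟩ := hr'.exists_walk_length_eq_dist
      calc (s t).graph.dist v u ≤ (p.mapLe hsub).length := SimpleGraph.dist_le _
        _ = (s (t+1)).graph.dist v u := by rw [SimpleGraph.Walk.length_map]; exact hp
    rw [hdist]
    omega
end

section
/- The distributed nearest-neighbor algorithm with dist values capped at n+1 terminates within O(n²) iterations, regardless of the pattern of adversarial edge deletions. Specifically: the agent moves in at most O(n²) iterations (since each move decreases pos.dist by at least 1, and the total increase of all dist values is at most n(n+1)), and the agent is stationary in at most O(n²) non-final iterations (since in every non-final stationary iteration some node's dist value strictly increases). -/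
open scoped Classical

/-- The parallel distance update with values capped at `n + 1`. -/
noncomputable def NNUpdateCap {V : Type*} (n : ℕ) (s : NNState V) : V → ℕ := fun v =>
  if s.vis v then
    min (n + 1) (1 + sInf {x : ℕ | ∃ u, (u = v ∨ s.graph.Adj v u) ∧ s.dist u = x})
  else s.dist v

/-- One iteration of the distributed NN algorithm with `dist` values capped at `n + 1`. -/
def NNStepCap {V : Type*} (n : ℕ) (s s' : NNState V) : Prop :=
  s'.dist = NNUpdateCap n s ∧
  ((∃ u, s.graph.Adj s.pos u ∧ NNUpdateCap n s u < NNUpdateCap n s s.pos ∧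
      s'.pos = u ∧ s'.vis = fun w => s.vis w ∨ w = u) ∨
    ((¬ ∃ u, s.graph.Adj s.pos u ∧ NNUpdateCap n s u < NNUpdateCap n s s.pos) ∧
      s'.pos = s.pos ∧ s'.vis = s.vis)) ∧
  s'.graph ≤ s.graph

namespace NNAux

variable {V : Type*}

lemma sInf_nbhd_le {G : SimpleGraph V} {d : V → ℕ} {v u : V} (h : u = v ∨ G.Adj v u) :
    sInf {x : ℕ | ∃ u, (u = v ∨ G.Adj v u) ∧ d u = x} ≤ d u :=
  Nat.sInf_le ⟨u, h, rfl⟩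

lemma sInf_nbhd_mono {G G' : SimpleGraph V} (hG : G' ≤ G) {d d' : V → ℕ}
    (hd : ∀ u, d u ≤ d' u) (v : V) :
    sInf {x : ℕ | ∃ u, (u = v ∨ G.Adj v u) ∧ d u = x}
      ≤ sInf {x : ℕ | ∃ u, (u = v ∨ G'.Adj v u) ∧ d' u = x} := by
  obtain ⟨u, hu, hdu⟩ := Nat.sInf_mem (⟨d' v, v, Or.inl rfl, rfl⟩ :
    Set.Nonempty {x : ℕ | ∃ u, (u = v ∨ G'.Adj v u) ∧ d' u = x})
  calc sInf {x : ℕ | ∃ u, (u = v ∨ G.Adj v u) ∧ d u = x}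
      ≤ d u := sInf_nbhd_le (hu.imp id (fun h => hG h))
    _ ≤ d' u := hd u
    _ = _ := hdu

structure NNInv (n : ℕ) (s : NNState V) : Prop where
  vis_pos : s.vis s.pos
  unvis : ∀ v, ¬ s.vis v → s.dist v = 0
  le_cap : ∀ v, s.dist v ≤ n + 1
  mono : ∀ v, s.dist v ≤ NNUpdateCap n s v

lemma vis_mono {n : ℕ} {s s' : NNState V} (st : NNStepCap n s s') {v : V}
    (h : s.vis v) : s'.vis v := by
  rcases st.2.1 with ⟨u, _, _, _, hv⟩ | ⟨_, _, hv⟩ <;> rw [hv]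
  · exact Or.inl h
  · exact h

lemma step_inv {n : ℕ} {s s' : NNState V} (inv : NNInv n s) (st : NNStepCap n s s') :
    NNInv n s' := by
  obtain ⟨hd, hmove, hg⟩ := st
  have hle : ∀ v, s.dist v ≤ s'.dist v := by intro v; rw [hd]; exact inv.mono v
  constructor
  · rcases hmove with ⟨u, _, _, hp, hv⟩ | ⟨_, hp, hv⟩ <;> rw [hp, hv]
    · exact Or.inr rfl
    · exact inv.vis_pos
  · intro v hv
    have hnv : ¬ s.vis v := fun h => hv (vis_mono ⟨hd, hmove, hg⟩ h)
    rw [hd]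
    simp only [NNUpdateCap, if_neg hnv]
    exact inv.unvis v hnv
  · intro v
    rw [hd]
    simp only [NNUpdateCap]
    split
    · exact min_le_left _ _
    · exact inv.le_cap v
  · intro v
    by_cases hv' : s'.vis v
    · rw [NNUpdateCap, if_pos hv']
      by_cases hv : s.vis v
      · have hlhs : s'.dist v = min (n + 1)
            (1 + sInf {x : ℕ | ∃ u, (u = v ∨ s.graph.Adj v u) ∧ s.dist u = x}) := by
          rw [hd]; simp only [NNUpdateCap, if_pos hv]
        rw [hlhs]
        have hs := sInf_nbhd_mono hg hle v
        omega
      · have h0 : s'.dist v = 0 := by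
          rw [hd]; simp only [NNUpdateCap, if_neg hv]; exact inv.unvis v hv
        rw [h0]; exact Nat.zero_le _
    · rw [NNUpdateCap, if_neg hv']

lemma adj_le {n : ℕ} {s : NNState V} (inv : NNInv n s)
    (fp : ∀ v, NNUpdateCap n s v = s.dist v) {a c : V} (h : s.graph.Adj a c) :
    s.dist a ≤ 1 + s.dist c := by
  by_cases hv : s.vis a
  · have heq := fp a
    simp only [NNUpdateCap, if_pos hv] at heq
    have h1 := sInf_nbhd_le (d := s.dist) (Or.inr h)
    omega
  · rw [inv.unvis a hv]; omega

lemma walk_bound {n : ℕ} {s : NNState V} (inv : NNInv n s)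
    (fp : ∀ v, NNUpdateCap n s v = s.dist v) :
    ∀ {a b : V} (p : s.graph.Walk a b), s.dist a ≤ s.dist b + p.length := by
  intro a b p
  induction p with
  | nil => simp
  | cons h p ih =>
    have := adj_le inv fp h
    simp only [SimpleGraph.Walk.length_cons]
    omega

lemma frozen_final [Fintype V] {n : ℕ} (hn : n = Fintype.card V) {s : NNState V}
    (inv : NNInv n s)
    (fp : ∀ v, NNUpdateCap n s v = s.dist v)
    (hne : ¬ ∃ u, s.graph.Adj s.pos u ∧ NNUpdateCap n s u < NNUpdateCap n s s.pos)
    {u : V} (hreach : s.graph.Reachable s.pos u) (hnv : ¬ s.vis u) : False := by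
  push_neg at hne
  have hstat : ∀ w, s.graph.Adj s.pos w → s.dist s.pos ≤ s.dist w := by
    intro w hw
    have := hne w hw
    rwa [fp, fp] at this
  have hpos_eq : min (n + 1)
      (1 + sInf {x : ℕ | ∃ u, (u = s.pos ∨ s.graph.Adj s.pos u) ∧ s.dist u = x})
      = s.dist s.pos := by
    have := fp s.pos
    simpa only [NNUpdateCap, if_pos inv.vis_pos] using this
  obtain ⟨w, hw, hdw⟩ := Nat.sInf_mem (⟨s.dist s.pos, s.pos, Or.inl rfl, rfl⟩ :
    Set.Nonempty {x : ℕ | ∃ u, (u = s.pos ∨ s.graph.Adj s.pos u) ∧ s.dist u = x})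
  have hge : s.dist s.pos ≤
      sInf {x : ℕ | ∃ u, (u = s.pos ∨ s.graph.Adj s.pos u) ∧ s.dist u = x} := by
    rw [← hdw]
    rcases hw with rfl | hw
    · exact le_rfl
    · exact hstat w hw
  have hpn : s.dist s.pos = n + 1 := by omega
  obtain ⟨p⟩ := hreach
  have hlen := p.toPath.2.length_lt
  have hwb := walk_bound inv fp (p.toPath : s.graph.Walk s.pos u)
  have hu0 : s.dist u = 0 := inv.unvis u hnv
  omega

lemma step_progress [Fintype V] {n : ℕ} (hn : n = Fintype.card V) {s s' : NNState V}
    (inv : NNInv n s) (st : NNStepCap n s s')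
    (nonfinal : ∃ u, s.graph.Reachable s.pos u ∧ ¬ s.vis u) :
    2 * (∑ v, (s.dist v : ℤ)) - (s.dist s.pos : ℤ) + 1
      ≤ 2 * (∑ v, (s'.dist v : ℤ)) - (s'.dist s'.pos : ℤ) := by
  obtain ⟨hd, hmove, hg⟩ := st
  have hle : ∀ v, s.dist v ≤ s'.dist v := by intro v; rw [hd]; exact inv.mono v
  have hA : (∑ v, (s.dist v : ℤ)) ≤ ∑ v, (s'.dist v : ℤ) :=
    Finset.sum_le_sum (fun v _ => by exact_mod_cast hle v)
  have hsingle : (s'.dist s.pos : ℤ) - (s.dist s.pos : ℤ)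
      ≤ (∑ v, (s'.dist v : ℤ)) - ∑ v, (s.dist v : ℤ) := by
    rw [← Finset.sum_sub_distrib]
    exact Finset.single_le_sum (f := fun v => (s'.dist v : ℤ) - (s.dist v : ℤ))
      (fun v _ => by have := hle v; push_cast; omega) (Finset.mem_univ s.pos)
  rcases hmove with ⟨u, hadj, hlt, hp, hv⟩ | ⟨hne, hp, hv⟩
  · have hlt' : s'.dist u < s'.dist s.pos := by rw [hd]; exact hlt
    rw [hp]
    have hc : (s'.dist u : ℤ) + 1 ≤ (s'.dist s.pos : ℤ) := by exact_mod_cast hlt'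
    linarith
  · rw [hp]
    have hA1 : (∑ v, (s.dist v : ℤ)) + 1 ≤ ∑ v, (s'.dist v : ℤ) := by
      rcases lt_or_ge (∑ v, (s.dist v : ℤ)) (∑ v, (s'.dist v : ℤ)) with h | h
      · omega
      · exfalso
        have heq : ∀ v ∈ Finset.univ, (s.dist v : ℤ) = (s'.dist v : ℤ) :=
          (Finset.sum_eq_sum_iff_of_le
            (fun v _ => (by exact_mod_cast hle v : (s.dist v : ℤ) ≤ (s'.dist v : ℤ)))).mp
            (le_antisymm hA h)
        have fp : ∀ v, NNUpdateCap n s v = s.dist v := by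
          intro v
          have h1 : s.dist v = s'.dist v := by
            exact_mod_cast heq v (Finset.mem_univ v)
          exact (congrFun hd v).symm.trans h1.symm
        obtain ⟨w, hreach, hnv⟩ := nonfinal
        exact frozen_final hn inv fp hne hreach hnv
    linarith

end NNAux

/-- The distributed nearest-neighbor algorithm (with `dist` values
capped at `n + 1`, where `n` is the number of nodes) terminates within `O(n²)`
iterations, regardless of the adversarial edge deletions: there is a constant `C` such
that on any `n`-node graph, within `C * n²` iterations the algorithm reaches a state in
which every node of the agent's connected component has been visited. -/
theorem nn_terminates_quadratic :
    ∃ C : ℕ, ∀ (V : Type) [Fintype V] (s : ℕ → NNState V) (v0 : V),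
      NNInit (s 0) v0 → (∀ t, NNStepCap (Fintype.card V) (s t) (s (t + 1))) →
      ∃ t ≤ C * (Fintype.card V) ^ 2,
        ∀ u : V, (s t).graph.Reachable (s t).pos u → (s t).vis u := by
  use 5
  intro V _inst s v0 hinit hstep
  by_contra hcon
  push_neg at hcon
  set n := Fintype.card V with hn
  obtain ⟨h1, h2, h3⟩ := hinit
  have hn1 : 1 ≤ n := @Fintype.card_pos V _ ⟨v0⟩
  have inv_all : ∀ t, NNAux.NNInv n (s t) := by
    intro t
    induction t with
    | zero =>
      constructor
      · rw [h3, h2]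
      · intro v _; rw [h1]
      · intro v; rw [h1]; exact Nat.zero_le _
      · intro v; rw [h1]; exact Nat.zero_le _
    | succ t ih => exact NNAux.step_inv ih (hstep t)
  have key : ∀ t, t ≤ 5 * n ^ 2 →
      (t : ℤ) ≤ 2 * (∑ v, ((s t).dist v : ℤ)) - ((s t).dist (s t).pos : ℤ) := by
    intro t
    induction t with
    | zero => intro _; simp [h1]
    | succ t ih =>
      intro ht
      have ht' : t ≤ 5 * n ^ 2 := Nat.le_of_succ_le ht
      have hΦ := NNAux.step_progress rfl (inv_all t) (hstep t) (hcon t ht')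
      have := ih ht'
      push_cast
      linarith
  have hT := key (5 * n ^ 2) le_rfl
  set T := 5 * n ^ 2 with hTdefT
  have hAle : (∑ v, ((s T).dist v : ℤ)) ≤ (n : ℤ) * (n + 1) := by
    calc (∑ v, ((s T).dist v : ℤ)) ≤ ∑ _v : V, ((n : ℤ) + 1) :=
          Finset.sum_le_sum (fun v _ => by exact_mod_cast (inv_all T).le_cap v)
      _ = (n : ℤ) * (n + 1) := by
          rw [Finset.sum_const, Finset.card_univ, ← hn]
          ring
  have hD0 : (0 : ℤ) ≤ ((s T).dist (s T).pos : ℤ) := Int.natCast_nonneg _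
  have hTZ : (T : ℤ) = 5 * (n : ℤ) ^ 2 := by push_cast [hTdefT]; ring
  have hnZ : (1 : ℤ) ≤ (n : ℤ) := by exact_mod_cast hn1
  nlinarith [hT, hAle, hD0, hTZ, hnZ]
end
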